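/- arXiv:2405.10933 — 4 statements merged into one kernel-verified Lean document; each statement's English description precedes it below -/
import Mathlib

section
/- For every superoperator Φ on 2^n × 2^n complex matrices and every a = (a¹,a²,a³), b = (b¹,b²,b³) ∈ ({−1,1}^n)³, one has f_Φ(a,b) = Σ_{x,y ∈ {0,1,2,3}^n} Φ̂(x,y) · 3^{−(|x|+|y|)} · ∏_{i : x_i ≠ 0} a^{x(i)}_i · ∏_{j : y_j ≠ 0} b^{y(j)}_j. -/
open scoped ComplexOrder

noncomputable section

/-- The four single-qubit Pauli matrices. -/
def pauli : Fin 4 → Matrix (Fin 2) (Fin 2) ℂ :=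
  ![!![1, 0; 0, 1], !![0, 1; 1, 0], !![0, -Complex.I; Complex.I, 0], !![1, 0; 0, -1]]

/-- The sign `±1` encoded by a Boolean: `false ↦ +1`, `true ↦ -1`. -/
def sgn (a : Bool) : ℂ := if a then -1 else 1

/-- `chi b a` is the unit eigenvector of the Pauli matrix `σ_{b+1}` (`b ∈ {0,1,2}` encoding the
Pauli label in `{1,2,3}`) with eigenvalue `sgn a ∈ {−1,1}`. -/
def chi : Fin 3 → Bool → (Fin 2 → ℂ) :=
  ![fun a => ![((Real.sqrt 2 : ℝ) : ℂ)⁻¹, sgn a * ((Real.sqrt 2 : ℝ) : ℂ)⁻¹],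
    fun a => ![((Real.sqrt 2 : ℝ) : ℂ)⁻¹, sgn a * Complex.I * ((Real.sqrt 2 : ℝ) : ℂ)⁻¹],
    fun a => if a then ![0, 1] else ![1, 0]]

/-- The rank-one matrix `|a^s⟩⟨b^t|` built from tensor products of Pauli eigenvectors:
its entries are `(∏ k, χ^{s(k)}_{a^{s(k)}_k}(i k)) · conj (∏ k, χ^{t(k)}_{b^{t(k)}_k}(j k))`. -/
def ketbra {n : ℕ} (s t : Fin n → Fin 3) (a b : Fin 3 → Fin n → Bool) :
    Matrix (Fin n → Fin 2) (Fin n → Fin 2) ℂ :=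
  fun i j =>
    (∏ k, chi (s k) (a (s k) k) (i k)) *
    (starRingEnd ℂ) (∏ k, chi (t k) (b (t k) k) (j k))

/-- The function `f_Φ` associated to a superoperator `Φ`:
`f_Φ(a,b) = 9^{−n} ∑_{s,t ∈ {1,2,3}^n} Tr[Φ(|a^s⟩⟨b^t|) |b^t⟩⟨a^s|]`. -/
def fPhi {n : ℕ}
    (Φ : Matrix (Fin n → Fin 2) (Fin n → Fin 2) ℂ →ₗ[ℂ]
         Matrix (Fin n → Fin 2) (Fin n → Fin 2) ℂ)
    (a b : Fin 3 → Fin n → Bool) : ℂ :=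
  ((9 : ℂ) ^ n)⁻¹ *
    ∑ s : Fin n → Fin 3, ∑ t : Fin n → Fin 3,
      (Φ (ketbra s t a b) * ketbra t s b a).trace

/-- The `n`-qubit Pauli operator indexed by a string `x ∈ {0,1,2,3}^n`. -/
def pauliString {n : ℕ} (x : Fin n → Fin 4) :
    Matrix (Fin n → Fin 2) (Fin n → Fin 2) ℂ :=
  fun i j => ∏ k, pauli (x k) (i k) (j k)

/-- The number of nonzero entries of a Pauli string. -/
def wt {n : ℕ} (x : Fin n → Fin 4) : ℕ :=
  (Finset.univ.filter fun k => x k ≠ 0).card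

/-- Re-indexing a nonzero Pauli label `x ∈ {1,2,3}` as an element of `{0,1,2}`
(the value at `x = 0` is irrelevant). -/
def idx : Fin 4 → Fin 3 := ![0, 0, 1, 2]

end
section aux
noncomputable section

/-- per-qubit quadratic form -/
def q (x : Fin 4) (s : Fin 3) (aa : Bool) : ℂ :=
  ∑ i, ∑ j, (starRingEnd ℂ) (chi s aa i) * pauli x i j * chi s aa j

lemma q_eval (x : Fin 4) (s : Fin 3) (aa : Bool) :
    q x s aa = if x = 0 then 1 else if (x : ℕ) = (s : ℕ) + 1 then sgn aa else 0 := by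
  obtain ⟨r, hr, hr2⟩ : ∃ r : ℝ, ((r:ℂ))⁻¹ = ((Real.sqrt 2 : ℝ) : ℂ)⁻¹ ∧
      (r:ℂ)⁻¹ * (r:ℂ)⁻¹ = 2⁻¹ := by
    refine ⟨Real.sqrt 2, rfl, ?_⟩
    rw [← mul_inv, ← Complex.ofReal_mul, Real.mul_self_sqrt (by norm_num)]; norm_num
  fin_cases x <;> fin_cases s <;> cases aa <;>
  ( simp only [q, chi, pauli, sgn, Fin.sum_univ_two, ← hr, Fin.isValue, Matrix.cons_val_one,
      Matrix.cons_val_zero, Matrix.head_cons, Matrix.cons_val', Matrix.empty_val',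
      Matrix.cons_val_fin_one, Matrix.head_fin_const, if_true, if_false, Bool.false_eq_true,
      map_mul, map_inv₀, Complex.conj_ofReal, Complex.conj_I, map_one, map_neg, Fin.val_zero,
      Fin.val_one, Fin.val_two, map_zero, Fin.mk_one, Fin.mk_zero]
    try norm_num
    try ring_nf
    try rw [show ((r:ℂ))⁻¹ ^ 2 = (r:ℂ)⁻¹ * (r:ℂ)⁻¹ by ring, hr2]
    try ring_nf
    try simp [Complex.I_sq]
    try ring_nf)

lemma q_sum (x : Fin 4) (f : Fin 3 → Bool) :
    ∑ s : Fin 3, q x s (f s) = if x = 0 then 3 else sgn (f (idx x)) := by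
  simp only [q_eval]
  fin_cases x <;> simp [Fin.sum_univ_three, idx]

variable {m : Type*} [Fintype m]

lemma trace_mul_vecMulVec (M : Matrix m m ℂ) (u z : m → ℂ) :
    (M * Matrix.vecMulVec u z).trace = dotProduct z (Matrix.mulVec M u) := by
  simp only [Matrix.trace, Matrix.diag, Matrix.mul_apply, Matrix.vecMulVec_apply,
    dotProduct, Matrix.mulVec, Finset.mul_sum]
  exact Finset.sum_congr rfl fun i _ => Finset.sum_congr rfl fun j _ => by ring

lemma vecMulVec_mulVec' (u z r : m → ℂ) :
    Matrix.mulVec (Matrix.vecMulVec u z) r = (dotProduct z r) • u := by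
  ext i
  simp only [Matrix.mulVec, Matrix.vecMulVec_apply, dotProduct, Pi.smul_apply,
    smul_eq_mul, Finset.sum_mul]
  exact Finset.sum_congr rfl fun j _ => by ring

variable {n : ℕ}

/-- tensor-product eigenvector -/
def vv (s : Fin n → Fin 3) (a : Fin 3 → Fin n → Bool) : (Fin n → Fin 2) → ℂ :=
  fun i => ∏ k, chi (s k) (a (s k) k) (i k)

lemma ketbra_eq (s t : Fin n → Fin 3) (a b : Fin 3 → Fin n → Bool) :
    ketbra s t a b = Matrix.vecMulVec (vv s a) (star (vv t b)) := by
  ext i j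
  rw [Matrix.vecMulVec_apply, ketbra, Pi.star_apply, starRingEnd_apply]
  rfl

/-- the quadratic form of a Pauli string on a tensor eigenvector -/
def Qf (x : Fin n → Fin 4) (s : Fin n → Fin 3) (a : Fin 3 → Fin n → Bool) : ℂ :=
  dotProduct (star (vv s a)) (Matrix.mulVec (pauliString x) (vv s a))

lemma trace_term (x y : Fin n → Fin 4) (s t : Fin n → Fin 3) (a b : Fin 3 → Fin n → Bool) :
    (pauliString x * ketbra s t a b * pauliString y * ketbra t s b a).trace
      = Qf x s a * Qf y t b := by
  rw [ketbra_eq, ketbra_eq, trace_mul_vecMulVec, ← Matrix.mulVec_mulVec, ← Matrix.mulVec_mulVec,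
    vecMulVec_mulVec', Matrix.mulVec_smul, dotProduct_smul, smul_eq_mul, mul_comm]
  rfl

lemma Qf_prod (x : Fin n → Fin 4) (s : Fin n → Fin 3) (a : Fin 3 → Fin n → Bool) :
    Qf x s a = ∏ k, q (x k) (s k) (a (s k) k) := by
  have step1 : Qf x s a = ∑ i : Fin n → Fin 2, ∑ j : Fin n → Fin 2,
      ∏ k, (starRingEnd ℂ) (chi (s k) (a (s k) k) (i k)) * pauli (x k) (i k) (j k) *
        chi (s k) (a (s k) k) (j k) := by
    unfold Qf vv pauliString
    simp only [dotProduct, Matrix.mulVec, Pi.star_apply, Finset.mul_sum]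
    refine Finset.sum_congr rfl fun i _ => Finset.sum_congr rfl fun j _ => ?_
    rw [← starRingEnd_apply, map_prod, ← Finset.prod_mul_distrib, ← Finset.prod_mul_distrib]
    exact Finset.prod_congr rfl fun k _ => (mul_assoc _ _ _).symm
  rw [step1]
  simp only [q]
  rw [Fintype.prod_sum (fun k (i : Fin 2) => ∑ j : Fin 2,
    (starRingEnd ℂ) (chi (s k) (a (s k) k) i) * pauli (x k) i j * chi (s k) (a (s k) k) j)]
  exact Finset.sum_congr rfl fun p _ => (Fintype.prod_sum
    (fun k (j : Fin 2) => (starRingEnd ℂ) (chi (s k) (a (s k) k) (p k)) *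
      pauli (x k) (p k) j * chi (s k) (a (s k) k) j)).symm

lemma Q_sum (x : Fin n → Fin 4) (a : Fin 3 → Fin n → Bool) :
    ∑ s : Fin n → Fin 3, Qf x s a
      = ∏ k, (if x k = 0 then (3:ℂ) else sgn (a (idx (x k)) k)) := by
  simp only [Qf_prod]
  rw [← Fintype.prod_sum (fun k (σ : Fin 3) => q (x k) σ (a σ k))]
  exact Finset.prod_congr rfl fun k _ => q_sum (x k) (fun σ => a σ k)

lemma prod_ite_eval (x : Fin n → Fin 4) (g : Fin n → ℂ) :
    ∏ k, (if x k = 0 then (3:ℂ) else g k)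
      = 3 ^ (Finset.univ.filter fun k => x k = 0).card *
        ∏ k ∈ Finset.univ.filter fun k => x k ≠ 0, g k := by
  rw [Finset.prod_ite, Finset.prod_const]

lemma card_filter_eq_zero (x : Fin n → Fin 4) :
    (Finset.univ.filter fun k => x k = 0).card + wt x = n := by
  rw [wt]
  simpa using Finset.card_filter_add_card_filter_not
    (s := (Finset.univ : Finset (Fin n))) (p := fun k => x k = 0)

lemma coef (x y : Fin n → Fin 4) :
    ((9:ℂ)^n)⁻¹ * (3 ^ (Finset.univ.filter fun k => x k = 0).card *
      3 ^ (Finset.univ.filter fun k => y k = 0).card) = ((3:ℂ) ^ (wt x + wt y))⁻¹ := by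
  have hx : (3:ℂ)^n = 3 ^ (Finset.univ.filter fun k => x k = 0).card * 3 ^ wt x := by
    rw [← pow_add, card_filter_eq_zero]
  have hy : (3:ℂ)^n = 3 ^ (Finset.univ.filter fun k => y k = 0).card * 3 ^ wt y := by
    rw [← pow_add, card_filter_eq_zero]
  have h3 : ∀ k : ℕ, (3:ℂ) ^ k ≠ 0 := fun k => pow_ne_zero k (by norm_num)
  rw [show (9:ℂ)^n = (3 ^ (Finset.univ.filter fun k => x k = 0).card * 3 ^ wt x) *
    (3 ^ (Finset.univ.filter fun k => y k = 0).card * 3 ^ wt y) by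
      rw [← hx, ← hy, ← mul_pow]; norm_num, pow_add]
  field_simp

end
end aux

/-- The Fourier expansion of `f_Φ`: for every superoperator `Φ` on `2^n × 2^n` matrices with
Pauli coefficients `c` and every `a = (a¹,a²,a³), b = (b¹,b²,b³) ∈ ({−1,1}^n)³`,
`f_Φ(a,b) = ∑_{x,y} c(x,y) · 3^{−(|x|+|y|)} · ∏_{i : x_i ≠ 0} a^{x(i)}_i ·
∏_{j : y_j ≠ 0} b^{y(j)}_j`. -/
theorem fPhi_eq_fourier_expansion {n : ℕ}
    (Φ : Matrix (Fin n → Fin 2) (Fin n → Fin 2) ℂ →ₗ[ℂ]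
         Matrix (Fin n → Fin 2) (Fin n → Fin 2) ℂ)
    (c : (Fin n → Fin 4) → (Fin n → Fin 4) → ℂ)
    (hc : ∀ ρ, Φ ρ = ∑ x, ∑ y, c x y • (pauliString x * ρ * pauliString y))
    (a b : Fin 3 → Fin n → Bool) :
    fPhi Φ a b =
      ∑ x : Fin n → Fin 4, ∑ y : Fin n → Fin 4,
        c x y * ((3 : ℂ) ^ (wt x + wt y))⁻¹ *
          (∏ i ∈ Finset.univ.filter fun i => x i ≠ 0, sgn (a (idx (x i)) i)) *
          (∏ j ∈ Finset.univ.filter fun j => y j ≠ 0, sgn (b (idx (y j)) j)) := by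

  have hterm : ∀ s t : Fin n → Fin 3,
      (Φ (ketbra s t a b) * ketbra t s b a).trace
        = ∑ x, ∑ y, c x y * (Qf x s a * Qf y t b) := by
    intro s t
    rw [hc]
    simp only [Finset.sum_mul, smul_mul_assoc, Matrix.trace_sum, Matrix.trace_smul,
      smul_eq_mul, trace_term]
  have key : ∑ s : Fin n → Fin 3, ∑ t : Fin n → Fin 3,
        ∑ x, ∑ y, c x y * (Qf x s a * Qf y t b)
      = ∑ x, ∑ y, c x y * ((∑ s : Fin n → Fin 3, Qf x s a) *
          (∑ t : Fin n → Fin 3, Qf y t b)) := by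
    calc ∑ s : Fin n → Fin 3, ∑ t : Fin n → Fin 3, ∑ x, ∑ y, c x y * (Qf x s a * Qf y t b)
        = ∑ s : Fin n → Fin 3, ∑ x, ∑ y, ∑ t : Fin n → Fin 3,
            c x y * (Qf x s a * Qf y t b) := by
          refine Finset.sum_congr rfl fun s _ => ?_
          rw [Finset.sum_comm]
          exact Finset.sum_congr rfl fun x _ => Finset.sum_comm
      _ = ∑ x, ∑ s : Fin n → Fin 3, ∑ y, ∑ t : Fin n → Fin 3,
            c x y * (Qf x s a * Qf y t b) := Finset.sum_comm
      _ = ∑ x, ∑ y, ∑ s : Fin n → Fin 3, ∑ t : Fin n → Fin 3,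
            c x y * (Qf x s a * Qf y t b) :=
          Finset.sum_congr rfl fun x _ => Finset.sum_comm
      _ = ∑ x, ∑ y, c x y * ((∑ s : Fin n → Fin 3, Qf x s a) *
            (∑ t : Fin n → Fin 3, Qf y t b)) := by
          refine Finset.sum_congr rfl fun x _ => Finset.sum_congr rfl fun y _ => ?_
          rw [Finset.sum_mul_sum, Finset.mul_sum]
          exact Finset.sum_congr rfl fun s _ => by rw [Finset.mul_sum]
  rw [fPhi]
  simp only [hterm]
  rw [key]
  simp only [Q_sum, prod_ite_eval]
  rw [Finset.mul_sum]
  refine Finset.sum_congr rfl fun x _ => ?_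
  rw [Finset.mul_sum]
  refine Finset.sum_congr rfl fun y _ => ?_
  have := coef x y
  set Pa := ∏ i ∈ Finset.univ.filter fun i => x i ≠ 0, sgn (a (idx (x i)) i)
  set Pb := ∏ j ∈ Finset.univ.filter fun j => y j ≠ 0, sgn (b (idx (y j)) j)
  linear_combination (c x y * Pa * Pb) * this
end

section
/- Let Φ be a superoperator on 2^n × 2^n complex matrices of degree at most d. Then, viewing f_Φ as a function on the Boolean cube {−1,1}^{6n}, f_Φ has Fourier degree at most d, and for every p > 0 one has ‖Φ̂‖_p ≤ 3^d · ‖f̂_Φ‖_p, where ‖Φ̂‖_p = (Σ_{x,y} |Φ̂(x,y)|^p)^{1/p} and ‖f̂_Φ‖_p = (Σ_{S ⊆ [6n]} |f̂_Φ(S)|^p)^{1/p}. -/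
open scoped ComplexOrder

noncomputable section

/-- The Fourier coefficient `ĝ(S)` of a function `g` on the Boolean cube `{−1,1}^ι`
(encoded as `ι → Bool`, `false ↦ +1`, `true ↦ −1`). -/
def cubeFourierCoeff {ι : Type*} [Fintype ι] [DecidableEq ι] (g : (ι → Bool) → ℂ)
    (S : Finset ι) : ℂ :=
  ((2 : ℂ) ^ Fintype.card ι)⁻¹ * ∑ z : ι → Bool, g z * ∏ i ∈ S, sgn (z i)

end

noncomputable section FPAux

namespace FP

open Finset

/-- Single-qubit Pauli expectation value. -/
def E (s : Fin 3) (α : Bool) (x : Fin 4) : ℂ :=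
  ∑ p : Fin 2, ∑ q : Fin 2, (starRingEnd ℂ) (chi s α p) * pauli x p q * chi s α q

lemma sqrt2_sq : ((Real.sqrt 2 : ℝ) : ℂ) ^ 2 = 2 := by
  rw [sq]; norm_cast; rw [Real.mul_self_sqrt (by norm_num)]

lemma E_eq (s : Fin 3) (α : Bool) (x : Fin 4) :
    E s α x = if x = 0 then 1 else if x = Fin.succ s then sgn α else 0 := by
  have h2 := sqrt2_sq
  unfold E
  fin_cases s <;> fin_cases x <;> cases α <;>
    simp [chi, pauli, sgn, Fin.sum_univ_two, Complex.conj_I, map_inv₀, Complex.conj_ofReal,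
      Fin.succ] <;>
    (try field_simp) <;> (try ring_nf) <;> (try simp [Complex.I_sq, h2]) <;> (try ring_nf)

def lower (x : Fin 4) : Fin 3 := if h : x = 0 then 0 else x.pred h

lemma lower_succ (j : Fin 3) : lower (Fin.succ j) = j := by
  simp [lower, (Fin.succ_ne_zero j)]

lemma succ_lower {x : Fin 4} (h : x ≠ 0) : Fin.succ (lower x) = x := by
  simp [lower, h]

lemma sum_E (α : Fin 3 → Bool) (x : Fin 4) :
    ∑ s : Fin 3, E s (α s) x = if x = 0 then 3 else sgn (α (lower x)) := by
  simp only [E_eq]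
  by_cases h : x = 0
  · simp [h]
  · obtain ⟨j, rfl⟩ : ∃ j : Fin 3, x = Fin.succ j := ⟨lower x, (succ_lower h).symm⟩
    simp [Fin.succ_ne_zero, lower_succ, Fin.succ_inj, eq_comm]

lemma sum_fun_prod {ι κ : Type*} [Fintype ι] [DecidableEq ι] [Fintype κ]
    (F : ι → κ → ℂ) :
    ∑ f : ι → κ, ∏ k, F k (f k) = ∏ k, ∑ c, F k c := (Fintype.prod_sum F).symm

lemma sum_sum_fun {ι κ₁ κ₂ M : Type*} [Fintype ι] [DecidableEq ι] [Fintype κ₁] [Fintype κ₂]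
    [AddCommMonoid M] (F : (ι → κ₁) → (ι → κ₂) → M) :
    (∑ i, ∑ j, F i j) = ∑ w : ι → κ₁ × κ₂, F (fun k => (w k).1) (fun k => (w k).2) := by
  have h1 : (∑ i, ∑ j, F i j) = ∑ p : (ι → κ₁) × (ι → κ₂), F p.1 p.2 :=
    (Fintype.sum_prod_type (fun p : (ι → κ₁) × (ι → κ₂) => F p.1 p.2)).symm
  rw [h1]
  exact (Fintype.sum_equiv (Equiv.arrowProdEquivProdArrow ι (fun _ => κ₁) (fun _ => κ₂)) _ _ (fun w => rfl)).symm

lemma sum_sum_prod {ι κ₁ κ₂ : Type*} [Fintype ι] [DecidableEq ι] [Fintype κ₁] [Fintype κ₂]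
    (G : ι → κ₁ → κ₂ → ℂ) :
    (∑ i : ι → κ₁, ∑ j : ι → κ₂, ∏ k, G k (i k) (j k)) = ∏ k, ∑ p, ∑ q, G k p q := by
  rw [sum_sum_fun (fun i j => ∏ k, G k (i k) (j k)),
    sum_fun_prod (fun k (c : κ₁ × κ₂) => G k c.1 c.2)]
  exact Finset.prod_congr rfl fun k _ => (Fintype.sum_prod_type _)

lemma trace_rankone {m : Type*} [Fintype m] [DecidableEq m]
    (X Y : Matrix m m ℂ) (u v : m → ℂ) :
    (X * Matrix.of (fun i j => u i * (starRingEnd ℂ) (v j)) * Y *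
        Matrix.of (fun i j => v i * (starRingEnd ℂ) (u j))).trace
      = (∑ i, ∑ j, (starRingEnd ℂ) (u i) * X i j * u j) *
        (∑ i, ∑ j, (starRingEnd ℂ) (v i) * Y i j * v j) := by
  have swap_pairs : ∀ F : m → m → m → m → ℂ,
      (∑ i : m, ∑ j : m, ∑ k : m, ∑ l : m, F k l i j)
        = ∑ i : m, ∑ j : m, ∑ k : m, ∑ l : m, F i j k l := by
    intro F
    have h : (∑ p : m × m, ∑ q : m × m, F p.1 p.2 q.1 q.2)
        = ∑ q : m × m, ∑ p : m × m, F p.1 p.2 q.1 q.2 := Finset.sum_comm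
    simp only [Fintype.sum_prod_type] at h
    exact h.symm
  have rev3 : ∀ G : m → m → m → ℂ,
      (∑ j : m, ∑ k : m, ∑ l : m, G l k j) = ∑ j : m, ∑ k : m, ∑ l : m, G j k l := by
    intro G
    rw [Finset.sum_comm]
    calc (∑ k : m, ∑ j : m, ∑ l : m, G l k j)
        = ∑ k : m, ∑ l : m, ∑ j : m, G l k j :=
          Finset.sum_congr rfl fun k _ => Finset.sum_comm
      _ = ∑ l : m, ∑ k : m, ∑ j : m, G l k j := Finset.sum_comm
  simp only [Matrix.trace, Matrix.diag, Matrix.mul_apply, Matrix.of_apply,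
    Finset.sum_mul, Finset.mul_sum]
  trans (∑ i : m, ∑ j : m, ∑ k : m, ∑ l : m,
      ((starRingEnd ℂ) (u i) * X i l * u l) * ((starRingEnd ℂ) (v k) * Y k j * v j))
  · apply Finset.sum_congr rfl; intro i _
    apply Finset.sum_congr rfl; intro j _
    apply Finset.sum_congr rfl; intro k _
    apply Finset.sum_congr rfl; intro l _
    ring
  trans (∑ i : m, ∑ j : m, ∑ k : m, ∑ l : m,
      ((starRingEnd ℂ) (u i) * X i j * u j) * ((starRingEnd ℂ) (v k) * Y k l * v l))
  · exact Finset.sum_congr rfl fun i _ =>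
      rev3 (fun b c d => ((starRingEnd ℂ) (u i) * X i b * u b) *
        ((starRingEnd ℂ) (v c) * Y c d * v d))
  rw [← swap_pairs (fun a b c d =>
      ((starRingEnd ℂ) (u a) * X a b * u b) * ((starRingEnd ℂ) (v c) * Y c d * v d))]
  try (apply Finset.sum_congr rfl; intro i _
       apply Finset.sum_congr rfl; intro j _
       apply Finset.sum_congr rfl; intro k _
       apply Finset.sum_congr rfl; intro l _
       ring)

lemma expect_factor {n : ℕ} (x : Fin n → Fin 4) (s : Fin n → Fin 3) (a : Fin 3 → Fin n → Bool) :
    (∑ i : Fin n → Fin 2, ∑ j : Fin n → Fin 2,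
        (starRingEnd ℂ) (∏ k, chi (s k) (a (s k) k) (i k)) * pauliString x i j *
          (∏ k, chi (s k) (a (s k) k) (j k)))
      = ∏ k, E (s k) (a (s k) k) (x k) := by
  unfold E
  rw [← sum_sum_prod (fun k p q =>
    (starRingEnd ℂ) (chi (s k) (a (s k) k) p) * pauli (x k) p q * chi (s k) (a (s k) k) q)]
  apply Finset.sum_congr rfl; intro i _
  apply Finset.sum_congr rfl; intro j _
  rw [map_prod, pauliString]
  rw [← Finset.prod_mul_distrib, ← Finset.prod_mul_distrib]

lemma trace_eq {n : ℕ} (x y : Fin n → Fin 4) (s t : Fin n → Fin 3)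
    (a b : Fin 3 → Fin n → Bool) :
    (pauliString x * ketbra s t a b * pauliString y * ketbra t s b a).trace
      = (∏ k, E (s k) (a (s k) k) (x k)) * ∏ k, E (t k) (b (t k) k) (y k) := by
  have h := trace_rankone (pauliString x) (pauliString y)
    (fun i => ∏ k, chi (s k) (a (s k) k) (i k)) (fun j => ∏ k, chi (t k) (b (t k) k) (j k))
  have e1 : (Matrix.of fun i j => (fun i => ∏ k, chi (s k) (a (s k) k) (i k)) i *
      (starRingEnd ℂ) ((fun j => ∏ k, chi (t k) (b (t k) k) (j k)) j)) = ketbra s t a b := rfl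
  have e2 : (Matrix.of fun i j => (fun j => ∏ k, chi (t k) (b (t k) k) (j k)) i *
      (starRingEnd ℂ) ((fun i => ∏ k, chi (s k) (a (s k) k) (i k)) j)) = ketbra t s b a := rfl
  rw [e1, e2] at h
  rw [h, expect_factor, expect_factor]

/-- The support set of a pair of Pauli strings inside the cube coordinates. -/
def SS {n : ℕ} (x y : Fin n → Fin 4) : Finset ((Fin 3 × Fin n) ⊕ (Fin 3 × Fin n)) :=
  ((Finset.univ.filter fun k => x k ≠ 0).image fun k => Sum.inl (lower (x k), k)) ∪
  ((Finset.univ.filter fun k => y k ≠ 0).image fun k => Sum.inr (lower (y k), k))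

lemma mem_SS_inl {n : ℕ} (x y : Fin n → Fin 4) (j : Fin 3) (k : Fin n) :
    Sum.inl (j, k) ∈ SS x y ↔ x k = Fin.succ j := by
  simp only [SS, Finset.mem_union, Finset.mem_image, Finset.mem_filter, Finset.mem_univ,
    true_and]
  constructor
  · rintro (⟨k', hk', he⟩ | ⟨k', hk', he⟩)
    · obtain ⟨h1, h2⟩ := Prod.mk.injEq .. ▸ Sum.inl.inj he
      subst h2; rw [← h1, succ_lower hk']
    · exact absurd he (by simp)
  · intro h
    refine Or.inl ⟨k, ?_, ?_⟩
    · rw [h]; exact Fin.succ_ne_zero j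
    · rw [h, lower_succ]

lemma mem_SS_inr {n : ℕ} (x y : Fin n → Fin 4) (j : Fin 3) (k : Fin n) :
    Sum.inr (j, k) ∈ SS x y ↔ y k = Fin.succ j := by
  simp only [SS, Finset.mem_union, Finset.mem_image, Finset.mem_filter, Finset.mem_univ,
    true_and]
  constructor
  · rintro (⟨k', hk', he⟩ | ⟨k', hk', he⟩)
    · exact absurd he (by simp)
    · obtain ⟨h1, h2⟩ := Prod.mk.injEq .. ▸ Sum.inr.inj he
      subst h2; rw [← h1, succ_lower hk']
  · intro h
    refine Or.inr ⟨k, ?_, ?_⟩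
    · rw [h]; exact Fin.succ_ne_zero j
    · rw [h, lower_succ]

lemma SS_inj {n : ℕ} {x y x' y' : Fin n → Fin 4} (h : SS x y = SS x' y') :
    x = x' ∧ y = y' := by
  constructor
  · funext k
    by_cases hx : x k = 0
    · by_cases hx' : x' k = 0
      · rw [hx, hx']
      · have hm := (mem_SS_inl x' y' (lower (x' k)) k).2 (succ_lower hx').symm
        rw [← h] at hm
        have := (mem_SS_inl x y (lower (x' k)) k).1 hm
        rw [this] at hx
        exact absurd hx (Fin.succ_ne_zero _)
    · have hm := (mem_SS_inl x y (lower (x k)) k).2 (succ_lower hx).symm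
      rw [h] at hm
      have := (mem_SS_inl x' y' (lower (x k)) k).1 hm
      rw [this, succ_lower hx]
  · funext k
    by_cases hy : y k = 0
    · by_cases hy' : y' k = 0
      · rw [hy, hy']
      · have hm := (mem_SS_inr x' y' (lower (y' k)) k).2 (succ_lower hy').symm
        rw [← h] at hm
        have := (mem_SS_inr x y (lower (y' k)) k).1 hm
        rw [this] at hy
        exact absurd hy (Fin.succ_ne_zero _)
    · have hm := (mem_SS_inr x y (lower (y k)) k).2 (succ_lower hy).symm
      rw [h] at hm
      have := (mem_SS_inr x' y' (lower (y k)) k).1 hm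
      rw [this, succ_lower hy]

lemma SS_disj {n : ℕ} (x y : Fin n → Fin 4) :
    Disjoint ((Finset.univ.filter fun k => x k ≠ 0).image fun k =>
        (Sum.inl (lower (x k), k) : (Fin 3 × Fin n) ⊕ (Fin 3 × Fin n)))
      ((Finset.univ.filter fun k => y k ≠ 0).image fun k => Sum.inr (lower (y k), k)) := by
  rw [Finset.disjoint_left]
  intro a ha hb
  obtain ⟨k1, _, rfl⟩ := Finset.mem_image.1 ha
  obtain ⟨k2, _, he⟩ := Finset.mem_image.1 hb
  exact absurd he (by simp)

lemma inj_inl {n : ℕ} (x : Fin n → Fin 4) : ∀ k1 ∈ Finset.univ.filter (fun k => x k ≠ 0),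
    ∀ k2 ∈ Finset.univ.filter (fun k => x k ≠ 0),
    (Sum.inl (lower (x k1), k1) : (Fin 3 × Fin n) ⊕ (Fin 3 × Fin n)) =
      Sum.inl (lower (x k2), k2) → k1 = k2 := by
  intro k1 _ k2 _ h
  simpa using (Prod.mk.injEq .. ▸ Sum.inl.inj h).2

lemma inj_inr {n : ℕ} (y : Fin n → Fin 4) : ∀ k1 ∈ Finset.univ.filter (fun k => y k ≠ 0),
    ∀ k2 ∈ Finset.univ.filter (fun k => y k ≠ 0),
    (Sum.inr (lower (y k1), k1) : (Fin 3 × Fin n) ⊕ (Fin 3 × Fin n)) =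
      Sum.inr (lower (y k2), k2) → k1 = k2 := by
  intro k1 _ k2 _ h
  simpa using (Prod.mk.injEq .. ▸ Sum.inr.inj h).2

lemma card_SS {n : ℕ} (x y : Fin n → Fin 4) : (SS x y).card = wt x + wt y := by
  rw [SS, Finset.card_union_of_disjoint (SS_disj x y),
    Finset.card_image_of_injOn (inj_inl x), Finset.card_image_of_injOn (inj_inr y)]
  rfl

lemma char_sum {ι : Type*} [Fintype ι] [DecidableEq ι] (U : Finset ι) :
    ∑ z : ι → Bool, ∏ i ∈ U, sgn (z i)
      = if U = ∅ then (2 : ℂ) ^ Fintype.card ι else 0 := by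
  calc (∑ z : ι → Bool, ∏ i ∈ U, sgn (z i))
      = ∑ z : ι → Bool, ∏ i, (if i ∈ U then sgn (z i) else 1) := by
        refine Finset.sum_congr rfl fun z _ => ?_
        rw [Finset.prod_ite_mem, Finset.univ_inter]
    _ = ∏ i, ∑ b : Bool, (if i ∈ U then sgn b else 1) :=
        sum_fun_prod (fun i b => if i ∈ U then sgn b else 1)
    _ = ∏ i, (if i ∈ U then 0 else 2) := by
        refine Finset.prod_congr rfl fun i _ => ?_
        by_cases h : i ∈ U <;> simp [h, sgn]
    _ = if U = ∅ then (2 : ℂ) ^ Fintype.card ι else 0 := by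
        by_cases hU : U = ∅
        · simp [hU, Finset.prod_const, Finset.card_univ]
        · rw [if_neg hU]
          obtain ⟨i, hi⟩ := Finset.nonempty_iff_ne_empty.2 hU
          exact Finset.prod_eq_zero (Finset.mem_univ i) (by simp [hi])

lemma fourier_char {ι : Type*} [Fintype ι] [DecidableEq ι] (T S : Finset ι) :
    cubeFourierCoeff (fun z => ∏ i ∈ T, sgn (z i)) S = if S = T then 1 else 0 := by
  unfold cubeFourierCoeff
  have key : ∀ z : ι → Bool, (∏ i ∈ T, sgn (z i)) * ∏ i ∈ S, sgn (z i)
      = ∏ i ∈ (T \ S) ∪ (S \ T), sgn (z i) := by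
    intro z
    rw [Finset.prod_union disjoint_sdiff_sdiff]
    have hT : (∏ i ∈ T, sgn (z i)) = (∏ i ∈ T \ S, sgn (z i)) * ∏ i ∈ T ∩ S, sgn (z i) := by
      rw [← Finset.prod_union (Finset.disjoint_sdiff_inter T S), Finset.sdiff_union_inter]
    have hS : (∏ i ∈ S, sgn (z i)) = (∏ i ∈ S \ T, sgn (z i)) * ∏ i ∈ T ∩ S, sgn (z i) := by
      rw [Finset.inter_comm T S,
        ← Finset.prod_union (Finset.disjoint_sdiff_inter S T), Finset.sdiff_union_inter]
    have hc : (∏ i ∈ T ∩ S, sgn (z i)) * ∏ i ∈ T ∩ S, sgn (z i) = 1 := by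
      rw [← Finset.prod_mul_distrib]
      exact Finset.prod_eq_one fun i _ => by cases z i <;> simp [sgn]
    calc (∏ i ∈ T, sgn (z i)) * ∏ i ∈ S, sgn (z i)
        = ((∏ i ∈ T \ S, sgn (z i)) * ∏ i ∈ S \ T, sgn (z i)) *
            ((∏ i ∈ T ∩ S, sgn (z i)) * ∏ i ∈ T ∩ S, sgn (z i)) := by rw [hT, hS]; ring
      _ = (∏ i ∈ T \ S, sgn (z i)) * ∏ i ∈ S \ T, sgn (z i) := by rw [hc, mul_one]
  rw [show (∑ z : ι → Bool, (∏ i ∈ T, sgn (z i)) * ∏ i ∈ S, sgn (z i))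
      = if ((T \ S) ∪ (S \ T)) = ∅ then (2:ℂ) ^ Fintype.card ι else 0 by
    rw [← char_sum]; exact Finset.sum_congr rfl fun z _ => key z]
  have hiff : ((T \ S) ∪ (S \ T)) = ∅ ↔ S = T := by
    rw [Finset.union_eq_empty, Finset.sdiff_eq_empty_iff_subset,
      Finset.sdiff_eq_empty_iff_subset]
    exact ⟨fun ⟨h1, h2⟩ => Finset.Subset.antisymm h2 h1, fun h => by simp [h]⟩
  by_cases h : S = T
  · rw [if_pos (hiff.2 h), if_pos h]
    rw [inv_mul_cancel₀ (by positivity)]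
  · rw [if_neg (fun he => h (hiff.1 he)), if_neg h, mul_zero]

lemma sum_swap_pairs {α β γ δ M : Type*} [Fintype α] [Fintype β] [Fintype γ] [Fintype δ]
    [AddCommMonoid M] (F : α → β → γ → δ → M) :
    (∑ a, ∑ b, ∑ c, ∑ d, F a b c d) = ∑ c, ∑ d, ∑ a, ∑ b, F a b c d := by
  have h : (∑ p : α × β, ∑ q : γ × δ, F p.1 p.2 q.1 q.2)
      = ∑ q : γ × δ, ∑ p : α × β, F p.1 p.2 q.1 q.2 := Finset.sum_comm
  simp only [Fintype.sum_prod_type] at h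
  exact h

lemma coeff_pow {n m₁ m₂ : ℕ} (h1 : m₁ ≤ n) (h2 : m₂ ≤ n) :
    ((9:ℂ)^n)⁻¹ * ((3:ℂ)^(n - m₁) * (3:ℂ)^(n - m₂)) = ((3:ℂ)⁻¹)^(m₁ + m₂) := by
  have h9 : (9:ℂ)^n = 3^n * 3^n := by rw [show (9:ℂ) = 3 * 3 by norm_num, mul_pow]
  have h3 : (3:ℂ) ≠ 0 := by norm_num
  rw [h9, inv_pow]
  field_simp
  rw [← pow_add, ← pow_add, ← pow_mul]
  congr 1
  omega

lemma sum_E_prod {n : ℕ} (x : Fin n → Fin 4) (a : Fin 3 → Fin n → Bool) :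
    (∑ s : Fin n → Fin 3, ∏ k, E (s k) (a (s k) k) (x k))
      = (3:ℂ)^(n - wt x) *
        ∏ k ∈ Finset.univ.filter (fun k => x k ≠ 0), sgn (a (lower (x k)) k) := by
  rw [sum_fun_prod (fun k v => E v (a v k) (x k))]
  have hcard : (Finset.univ.filter fun k : Fin n => x k = 0).card = n - wt x := by
    have h := Finset.card_filter_add_card_filter_not
      (s := (Finset.univ : Finset (Fin n))) (p := fun k => x k = 0)
    simp only [Finset.card_univ, Fintype.card_fin] at h
    have hwt : (Finset.univ.filter fun k : Fin n => ¬ x k = 0).card = wt x := by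
      rw [wt]
    omega
  calc (∏ k, ∑ v : Fin 3, E v (a v k) (x k))
      = ∏ k, (if x k = 0 then (3:ℂ) else sgn (a (lower (x k)) k)) :=
        Finset.prod_congr rfl fun k _ => sum_E _ _
    _ = (∏ k ∈ Finset.univ.filter (fun k => x k = 0), (3:ℂ)) *
        ∏ k ∈ Finset.univ.filter (fun k => ¬ x k = 0), sgn (a (lower (x k)) k) :=
        Finset.prod_ite _ _
    _ = (3:ℂ)^(n - wt x) *
        ∏ k ∈ Finset.univ.filter (fun k => x k ≠ 0), sgn (a (lower (x k)) k) := by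
        rw [Finset.prod_const, hcard]

lemma prod_SS {n : ℕ} (x y : Fin n → Fin 4)
    (z : (Fin 3 × Fin n) ⊕ (Fin 3 × Fin n) → Bool) :
    (∏ i ∈ SS x y, sgn (z i))
      = (∏ k ∈ Finset.univ.filter (fun k => x k ≠ 0), sgn (z (Sum.inl (lower (x k), k)))) *
        ∏ k ∈ Finset.univ.filter (fun k => y k ≠ 0), sgn (z (Sum.inr (lower (y k), k))) := by
  rw [SS, Finset.prod_union (SS_disj x y), Finset.prod_image (inj_inl x),
    Finset.prod_image (inj_inr y)]

lemma cubeFourierCoeff_sum {ι β : Type*} [Fintype ι] [DecidableEq ι] [Fintype β]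
    (F : β → (ι → Bool) → ℂ) (S : Finset ι) :
    cubeFourierCoeff (fun z => ∑ b, F b z) S = ∑ b, cubeFourierCoeff (F b) S := by
  unfold cubeFourierCoeff
  rw [show (∑ z : ι → Bool, (∑ b, F b z) * ∏ i ∈ S, sgn (z i))
      = ∑ b, ∑ z : ι → Bool, F b z * ∏ i ∈ S, sgn (z i) by
    rw [← Finset.sum_comm]
    exact Finset.sum_congr rfl fun z _ => Finset.sum_mul ..]
  rw [Finset.mul_sum]

lemma cubeFourierCoeff_smul {ι : Type*} [Fintype ι] [DecidableEq ι]
    (a : ℂ) (F : (ι → Bool) → ℂ) (S : Finset ι) :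
    cubeFourierCoeff (fun z => a * F z) S = a * cubeFourierCoeff F S := by
  unfold cubeFourierCoeff
  rw [show (∑ z : ι → Bool, a * F z * ∏ i ∈ S, sgn (z i))
      = a * ∑ z : ι → Bool, F z * ∏ i ∈ S, sgn (z i) by
    rw [Finset.mul_sum]; exact Finset.sum_congr rfl fun z _ => by ring]
  ring

lemma wt_le {n : ℕ} (x : Fin n → Fin 4) : wt x ≤ n :=
  le_trans (Finset.card_filter_le _ _) (by simp)

lemma g_expand {n : ℕ}
    (Φ : Matrix (Fin n → Fin 2) (Fin n → Fin 2) ℂ →ₗ[ℂ]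
         Matrix (Fin n → Fin 2) (Fin n → Fin 2) ℂ)
    (c : (Fin n → Fin 4) → (Fin n → Fin 4) → ℂ)
    (hc : ∀ ρ, Φ ρ = ∑ x, ∑ y, c x y • (pauliString x * ρ * pauliString y))
    (z : (Fin 3 × Fin n) ⊕ (Fin 3 × Fin n) → Bool) :
    fPhi Φ (fun j i => z (Sum.inl (j, i))) (fun j i => z (Sum.inr (j, i)))
      = ∑ x : Fin n → Fin 4, ∑ y : Fin n → Fin 4,
          c x y * ((3:ℂ)⁻¹) ^ (wt x + wt y) * ∏ i ∈ SS x y, sgn (z i) := by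
  have step1 : ∀ s t : Fin n → Fin 3,
      (Φ (ketbra s t (fun j i => z (Sum.inl (j, i))) (fun j i => z (Sum.inr (j, i)))) *
        ketbra t s (fun j i => z (Sum.inr (j, i))) (fun j i => z (Sum.inl (j, i)))).trace
      = ∑ x, ∑ y, c x y *
          ((∏ k, E (s k) (z (Sum.inl (s k, k))) (x k)) *
            ∏ k, E (t k) (z (Sum.inr (t k, k))) (y k)) := by
    intro s t
    rw [hc]
    simp only [Matrix.sum_mul, smul_mul_assoc, Matrix.trace_sum, Matrix.trace_smul,
      smul_eq_mul]
    exact Finset.sum_congr rfl fun x _ => Finset.sum_congr rfl fun y _ => by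
      rw [trace_eq]
  unfold fPhi
  calc ((9:ℂ)^n)⁻¹ * ∑ s : Fin n → Fin 3, ∑ t : Fin n → Fin 3,
        (Φ (ketbra s t (fun j i => z (Sum.inl (j, i))) (fun j i => z (Sum.inr (j, i)))) *
          ketbra t s (fun j i => z (Sum.inr (j, i))) (fun j i => z (Sum.inl (j, i)))).trace
      = ((9:ℂ)^n)⁻¹ * ∑ s : Fin n → Fin 3, ∑ t : Fin n → Fin 3, ∑ x, ∑ y, c x y *
          ((∏ k, E (s k) (z (Sum.inl (s k, k))) (x k)) *
            ∏ k, E (t k) (z (Sum.inr (t k, k))) (y k)) := by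
        congr 1
        exact Finset.sum_congr rfl fun s _ => Finset.sum_congr rfl fun t _ => step1 s t
    _ = ((9:ℂ)^n)⁻¹ * ∑ x, ∑ y, ∑ s : Fin n → Fin 3, ∑ t : Fin n → Fin 3, c x y *
          ((∏ k, E (s k) (z (Sum.inl (s k, k))) (x k)) *
            ∏ k, E (t k) (z (Sum.inr (t k, k))) (y k)) := by
        rw [sum_swap_pairs]
    _ = ∑ x, ∑ y, ((9:ℂ)^n)⁻¹ * (c x y *
          ((∑ s : Fin n → Fin 3, ∏ k, E (s k) (z (Sum.inl (s k, k))) (x k)) *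
            ∑ t : Fin n → Fin 3, ∏ k, E (t k) (z (Sum.inr (t k, k))) (y k))) := by
        rw [Finset.mul_sum]
        refine Finset.sum_congr rfl fun x _ => ?_
        rw [Finset.mul_sum]
        refine Finset.sum_congr rfl fun y _ => ?_
        congr 1
        rw [Fintype.sum_mul_sum]
        simp only [Finset.mul_sum]
    _ = ∑ x, ∑ y, c x y * ((3:ℂ)⁻¹) ^ (wt x + wt y) * ∏ i ∈ SS x y, sgn (z i) := by
        refine Finset.sum_congr rfl fun x _ => Finset.sum_congr rfl fun y _ => ?_
        rw [sum_E_prod x (fun j i => z (Sum.inl (j, i))),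
          sum_E_prod y (fun j i => z (Sum.inr (j, i))), prod_SS x y z]
        rw [← coeff_pow (wt_le x) (wt_le y)]
        ring


end FP

end FPAux

set_option maxHeartbeats 2000000 in
/-- Let `Φ` be a superoperator on `2^n × 2^n` matrices of degree at most `d`, with Pauli
coefficients `c`. Viewing `f_Φ` as a function `g` on the Boolean cube `{−1,1}^{6n}`, `g` has
Fourier degree at most `d`, and for every `p > 0`,
`(∑_{x,y} |c(x,y)|^p)^{1/p} ≤ 3^d · (∑_S |ĝ(S)|^p)^{1/p}`. -/
theorem fPhi_degree_and_pnorm {n d : ℕ}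
    (Φ : Matrix (Fin n → Fin 2) (Fin n → Fin 2) ℂ →ₗ[ℂ]
         Matrix (Fin n → Fin 2) (Fin n → Fin 2) ℂ)
    (c : (Fin n → Fin 4) → (Fin n → Fin 4) → ℂ)
    (hc : ∀ ρ, Φ ρ = ∑ x, ∑ y, c x y • (pauliString x * ρ * pauliString y))
    (hdeg : ∀ x y, d < wt x + wt y → c x y = 0)
    (g : ((Fin 3 × Fin n) ⊕ (Fin 3 × Fin n) → Bool) → ℂ)
    (hg : ∀ z, g z = fPhi Φ (fun j i => z (Sum.inl (j, i))) (fun j i => z (Sum.inr (j, i)))) :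
    (∀ S : Finset ((Fin 3 × Fin n) ⊕ (Fin 3 × Fin n)), d < S.card → cubeFourierCoeff g S = 0) ∧
    (∀ p : ℝ, 0 < p →
      (∑ x : Fin n → Fin 4, ∑ y : Fin n → Fin 4, ‖c x y‖ ^ p) ^ (1 / p) ≤
        (3 : ℝ) ^ d *
          (∑ S : Finset ((Fin 3 × Fin n) ⊕ (Fin 3 × Fin n)), ‖cubeFourierCoeff g S‖ ^ p) ^ (1 / p)) := by
  classical
  have hg' : g = fun z => ∑ x, ∑ y,
      c x y * ((3:ℂ)⁻¹) ^ (wt x + wt y) * ∏ i ∈ FP.SS x y, sgn (z i) := by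
    funext z; rw [hg z, FP.g_expand Φ c hc z]
  have hcoeff : ∀ S : Finset ((Fin 3 × Fin n) ⊕ (Fin 3 × Fin n)), cubeFourierCoeff g S
      = ∑ x, ∑ y, (c x y * ((3:ℂ)⁻¹) ^ (wt x + wt y)) *
          (if S = FP.SS x y then 1 else 0) := by
    intro S
    rw [hg', FP.cubeFourierCoeff_sum]
    refine Finset.sum_congr rfl fun x _ => ?_
    rw [FP.cubeFourierCoeff_sum]
    refine Finset.sum_congr rfl fun y _ => ?_
    rw [FP.cubeFourierCoeff_smul (c x y * ((3:ℂ)⁻¹) ^ (wt x + wt y))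
      (fun z => ∏ i ∈ FP.SS x y, sgn (z i)) S, FP.fourier_char (FP.SS x y) S]
  have hcSS : ∀ x y, cubeFourierCoeff g (FP.SS x y)
      = c x y * ((3:ℂ)⁻¹) ^ (wt x + wt y) := by
    intro x y
    rw [hcoeff (FP.SS x y)]
    rw [Finset.sum_eq_single_of_mem x (Finset.mem_univ x) ?hx]
    case hx =>
      intro x' _ hx'
      apply Finset.sum_eq_zero; intro y' _
      rw [if_neg (fun he => hx' ((FP.SS_inj he).1.symm)), mul_zero]
    rw [Finset.sum_eq_single_of_mem y (Finset.mem_univ y) ?hy]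
    case hy =>
      intro y' _ hy'
      rw [if_neg (fun he => hy' ((FP.SS_inj he).2.symm)), mul_zero]
    rw [if_pos rfl, mul_one]
  refine ⟨?_, ?_⟩
  · intro S hS
    rw [hcoeff S]
    apply Finset.sum_eq_zero; intro x _
    apply Finset.sum_eq_zero; intro y _
    by_cases he : S = FP.SS x y
    · have hd : d < wt x + wt y := by rw [← FP.card_SS x y, ← he]; exact hS
      rw [hdeg x y hd]; simp
    · rw [if_neg he, mul_zero]
  · intro p hp
    have key : ∀ x y, ‖c x y‖ ^ p ≤
        ((3:ℝ)^d) ^ p * ‖cubeFourierCoeff g (FP.SS x y)‖ ^ p := by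
      intro x y
      by_cases hc0 : c x y = 0
      · rw [hc0, norm_zero, Real.zero_rpow hp.ne']
        positivity
      · have hwle : wt x + wt y ≤ d := not_lt.1 fun h => hc0 (hdeg x y h)
        rw [hcSS x y]
        have hnorm : ‖c x y * ((3:ℂ)⁻¹) ^ (wt x + wt y)‖
            = ‖c x y‖ * ((3:ℝ)⁻¹) ^ (wt x + wt y) := by
          rw [norm_mul, norm_pow, norm_inv]
          norm_num
        rw [hnorm]
        have hcw : ‖c x y‖ = (3:ℝ)^(wt x + wt y) *
            (‖c x y‖ * ((3:ℝ)⁻¹) ^ (wt x + wt y)) := by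
          rw [mul_comm ‖c x y‖, ← mul_assoc, ← mul_pow]
          norm_num
        calc ‖c x y‖ ^ p
            = ((3:ℝ)^(wt x + wt y) * (‖c x y‖ * ((3:ℝ)⁻¹)^(wt x + wt y))) ^ p := by
              rw [← hcw]
          _ = ((3:ℝ)^(wt x + wt y)) ^ p * (‖c x y‖ * ((3:ℝ)⁻¹)^(wt x + wt y)) ^ p :=
              Real.mul_rpow (by positivity) (by positivity)
          _ ≤ ((3:ℝ)^d) ^ p * (‖c x y‖ * ((3:ℝ)⁻¹)^(wt x + wt y)) ^ p := by
              apply mul_le_mul_of_nonneg_right _ (Real.rpow_nonneg (by positivity) _)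
              exact Real.rpow_le_rpow (by positivity)
                (pow_le_pow_right₀ (by norm_num) hwle) hp.le
    have hsub : (∑ x : Fin n → Fin 4, ∑ y : Fin n → Fin 4,
          ‖cubeFourierCoeff g (FP.SS x y)‖ ^ p)
        ≤ ∑ S : Finset ((Fin 3 × Fin n) ⊕ (Fin 3 × Fin n)),
            ‖cubeFourierCoeff g S‖ ^ p := by
      have hflat : (∑ x : Fin n → Fin 4, ∑ y : Fin n → Fin 4,
            ‖cubeFourierCoeff g (FP.SS x y)‖ ^ p)
          = ∑ q : (Fin n → Fin 4) × (Fin n → Fin 4),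
              ‖cubeFourierCoeff g (FP.SS q.1 q.2)‖ ^ p :=
        (Fintype.sum_prod_type (fun q : (Fin n → Fin 4) × (Fin n → Fin 4) =>
          ‖cubeFourierCoeff g (FP.SS q.1 q.2)‖ ^ p)).symm
      rw [hflat]
      rw [show (∑ q : (Fin n → Fin 4) × (Fin n → Fin 4),
            ‖cubeFourierCoeff g (FP.SS q.1 q.2)‖ ^ p)
          = ∑ S ∈ Finset.univ.image (fun q : (Fin n → Fin 4) × (Fin n → Fin 4) =>
              FP.SS q.1 q.2), ‖cubeFourierCoeff g S‖ ^ p from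
        (Finset.sum_image (f := fun S => ‖cubeFourierCoeff g S‖ ^ p) (fun q1 _ q2 _ he => by
          obtain ⟨h1, h2⟩ := FP.SS_inj he
          exact Prod.ext h1 h2)).symm]
      exact Finset.sum_le_sum_of_subset_of_nonneg (Finset.subset_univ _)
        (fun S _ _ => by positivity)
    have hsum1 : (∑ x : Fin n → Fin 4, ∑ y : Fin n → Fin 4, ‖c x y‖ ^ p)
        ≤ ((3:ℝ)^d) ^ p * ∑ S : Finset ((Fin 3 × Fin n) ⊕ (Fin 3 × Fin n)),
            ‖cubeFourierCoeff g S‖ ^ p := by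
      calc (∑ x : Fin n → Fin 4, ∑ y : Fin n → Fin 4, ‖c x y‖ ^ p)
          ≤ ∑ x : Fin n → Fin 4, ∑ y : Fin n → Fin 4,
              ((3:ℝ)^d) ^ p * ‖cubeFourierCoeff g (FP.SS x y)‖ ^ p :=
            Finset.sum_le_sum fun x _ => Finset.sum_le_sum fun y _ => key x y
        _ = ((3:ℝ)^d) ^ p * ∑ x : Fin n → Fin 4, ∑ y : Fin n → Fin 4,
              ‖cubeFourierCoeff g (FP.SS x y)‖ ^ p := by
            rw [Finset.mul_sum]
            exact Finset.sum_congr rfl fun x _ => (Finset.mul_sum ..).symm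
        _ ≤ ((3:ℝ)^d) ^ p * ∑ S : Finset ((Fin 3 × Fin n) ⊕ (Fin 3 × Fin n)),
              ‖cubeFourierCoeff g S‖ ^ p :=
            mul_le_mul_of_nonneg_left hsub (by positivity)
    have hA : (0:ℝ) ≤ ∑ x : Fin n → Fin 4, ∑ y : Fin n → Fin 4, ‖c x y‖ ^ p := by
      positivity
    have hmono := Real.rpow_le_rpow hA hsum1 (by positivity : (0:ℝ) ≤ 1/p)
    refine le_trans hmono (le_of_eq ?_)
    rw [Real.mul_rpow (by positivity) (by positivity)]
    congr 1
    rw [← Real.rpow_mul (by positivity : (0:ℝ) ≤ (3:ℝ)^d),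
      mul_one_div_cancel hp.ne', Real.rpow_one]
end

section
/- Let 𝕂 ∈ {ℝ, ℂ}, let T : (𝕂^n)^d → 𝕂 be a d-linear form, and let s ∈ [d]. Then ‖T‖_cb ≥ Σ_{i_s ∈ [n]} √(Σ_{i₁,…,i_{s−1},i_{s+1},…,i_d ∈ [n]} |T̂_{i₁,…,i_d}|²). -/
noncomputable section

/-- Operator norm (largest singular value) of a square matrix over `𝕜 ∈ {ℝ, ℂ}`. -/
def opNormK {𝕜 : Type*} [RCLike 𝕜] {m : Type*} [Fintype m] [DecidableEq m]
    (A : Matrix m m 𝕜) : ℝ :=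
  ‖Matrix.toEuclideanCLM (𝕜 := 𝕜) A‖

/-- The completely bounded norm of a `d`-linear form on `(𝕜^n)^d` given by its coefficient
array `c`: the supremum of `‖∑ i, c i • X₁(i₁)⋯X_d(i_d)‖_op` over all `m ∈ ℕ` and all
`m × m` matrices `X_s(i)` of operator norm at most `1`. -/
def cbNorm {𝕜 : Type*} [RCLike 𝕜] {n d : ℕ} (c : (Fin d → Fin n) → 𝕜) : ℝ :=
  sSup {r : ℝ | ∃ (m : ℕ) (X : Fin d → Fin n → Matrix (Fin m) (Fin m) 𝕜),
    (∀ s i, opNormK (X s i) ≤ 1) ∧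
    r = opNormK (∑ i : Fin d → Fin n, c i • (List.ofFn fun s => X s (i s)).prod)}

/-- The coefficients `T̂_{i₁,…,i_d} = T(e_{i₁},…,e_{i_d})` of a `d`-linear form on `(𝕜^n)^d`. -/
def mlCoeff {𝕜 : Type*} [RCLike 𝕜] {n d : ℕ}
    (T : MultilinearMap 𝕜 (fun _ : Fin d => (Fin n → 𝕜)) 𝕜) (i : Fin d → Fin n) : 𝕜 :=
  T fun s => Pi.single (i s) 1

end

noncomputable section
section Helpers
variable {𝕜 : Type*} [RCLike 𝕜]


lemma opNormK_nonneg {α : Type*} [Fintype α] [DecidableEq α] (A : Matrix α α 𝕜) :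
    0 ≤ opNormK A := norm_nonneg _

lemma norm_toEuclideanCLM_apply {α : Type*} [Fintype α] [DecidableEq α] (A : Matrix α α 𝕜)
    (x : α → 𝕜) :
    ‖Matrix.toEuclideanCLM (𝕜 := 𝕜) A ((WithLp.equiv 2 (α → 𝕜)).symm x)‖
      = Real.sqrt (∑ p, ‖A.mulVec x p‖ ^ 2) := by
  rw [WithLp.equiv_symm_apply, Matrix.toEuclideanCLM_toLp, EuclideanSpace.norm_eq]

lemma bridgeDown {α : Type*} [Fintype α] [DecidableEq α] (A : Matrix α α 𝕜) (x : α → 𝕜) :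
    Real.sqrt (∑ p, ‖A.mulVec x p‖ ^ 2) ≤ opNormK A * Real.sqrt (∑ q, ‖x q‖ ^ 2) := by
  have h := ContinuousLinearMap.le_opNorm (Matrix.toEuclideanCLM (𝕜 := 𝕜) A)
    ((WithLp.equiv 2 (α → 𝕜)).symm x)
  rwa [norm_toEuclideanCLM_apply, EuclideanSpace.norm_eq] at h

lemma bridgeUp {α : Type*} [Fintype α] [DecidableEq α] (A : Matrix α α 𝕜)
    (h : ∀ x : α → 𝕜, ∑ p, ‖A.mulVec x p‖ ^ 2 ≤ ∑ q, ‖x q‖ ^ 2) : opNormK A ≤ 1 := by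
  apply ContinuousLinearMap.opNorm_le_bound _ zero_le_one
  intro y
  rw [one_mul]
  have : y = (WithLp.equiv 2 (α → 𝕜)).symm (WithLp.equiv 2 (α → 𝕜) y) := rfl
  rw [this, norm_toEuclideanCLM_apply, EuclideanSpace.norm_eq]
  exact Real.sqrt_le_sqrt (h _)

lemma sub_mulVec {α β : Type*} [Fintype α] [Fintype β] [DecidableEq α] [DecidableEq β]
    (e : α ≃ β) (A : Matrix β β 𝕜) (x : α → 𝕜) :
    (A.submatrix e e).mulVec x = fun p => A.mulVec (x ∘ e.symm) (e p) := by
  funext p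
  simp only [Matrix.mulVec, Matrix.submatrix_apply, dotProduct, Function.comp]
  refine Finset.sum_congr rfl (fun q _ => ?_) |>.trans (Equiv.sum_comp e (fun q' => A (e p) q' * x (e.symm q')))
  simp

lemma opNormK_submatrix_le {α β : Type*} [Fintype α] [Fintype β] [DecidableEq α] [DecidableEq β]
    (e : α ≃ β) (A : Matrix β β 𝕜) : opNormK (A.submatrix e e) ≤ opNormK A := by
  apply ContinuousLinearMap.opNorm_le_bound _ (opNormK_nonneg A)
  intro y
  have : y = (WithLp.equiv 2 (α → 𝕜)).symm (WithLp.equiv 2 (α → 𝕜) y) := rfl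
  rw [this, norm_toEuclideanCLM_apply, EuclideanSpace.norm_eq]
  set x : α → 𝕜 := WithLp.equiv 2 (α → 𝕜) y
  have h1 : ∑ p, ‖(A.submatrix e e).mulVec x p‖ ^ 2 = ∑ p', ‖A.mulVec (x ∘ e.symm) p'‖ ^ 2 := by
    rw [sub_mulVec]
    exact Equiv.sum_comp e (fun p' => ‖A.mulVec (x ∘ e.symm) p'‖ ^ 2)
  have h2 : ∑ q, ‖x q‖ ^ 2 = ∑ q', ‖(x ∘ e.symm) q'‖ ^ 2 :=
    (Equiv.sum_comp e.symm (fun q => ‖x q‖ ^ 2)).symm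
  calc Real.sqrt (∑ p, ‖(A.submatrix e e).mulVec x p‖ ^ 2)
      = Real.sqrt (∑ p', ‖A.mulVec (x ∘ e.symm) p'‖ ^ 2) := by rw [h1]
    _ ≤ opNormK A * Real.sqrt (∑ q', ‖(x ∘ e.symm) q'‖ ^ 2) := bridgeDown A (x ∘ e.symm)
    _ = opNormK A * Real.sqrt (∑ q, ‖x q‖ ^ 2) := by rw [← h2]

lemma opNormK_submatrix {α β : Type*} [Fintype α] [Fintype β] [DecidableEq α] [DecidableEq β]
    (e : α ≃ β) (A : Matrix β β 𝕜) : opNormK (A.submatrix e e) = opNormK A := by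
  refine le_antisymm (opNormK_submatrix_le e A) ?_
  have : A = (A.submatrix e e).submatrix e.symm e.symm := by
    ext p q; simp
  conv_lhs => rw [this]
  exact opNormK_submatrix_le e.symm _


lemma mulVec_rowform {α : Type*} [Fintype α] [DecidableEq α]
    (P : α → Prop) [DecidablePred P] (τ : α → α) (w : α → 𝕜) :
    (Matrix.of fun p q => if P p ∧ q = τ p then (1:𝕜) else 0).mulVec w
      = fun p => if P p then w (τ p) else 0 := by
  funext p
  simp only [Matrix.mulVec, dotProduct, Matrix.of_apply]
  by_cases h : P p
  · simp only [h, true_and, ite_mul, one_mul, zero_mul]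
    rw [Finset.sum_ite_eq' Finset.univ (τ p) w]
    simp
  · simp [h]

lemma rowform_sumsq {α : Type*} [Fintype α] [DecidableEq α]
    (P : α → Prop) [DecidablePred P] (τ : α → α)
    (hτ : ∀ p p', P p → P p' → τ p = τ p' → p = p') (x : α → 𝕜) :
    ∑ p, ‖(Matrix.of fun p q => if P p ∧ q = τ p then (1:𝕜) else 0).mulVec x p‖ ^ 2
      ≤ ∑ q, ‖x q‖ ^ 2 := by
  rw [mulVec_rowform]
  have h1 : ∀ p : α, ‖if P p then x (τ p) else 0‖ ^ 2 = if P p then ‖x (τ p)‖ ^ 2 else 0 := by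
    intro p; by_cases h : P p <;> simp [h]
  simp only [h1]
  rw [Finset.sum_ite, Finset.sum_const_zero, add_zero]
  have himg : ∑ p ∈ Finset.filter (fun p => P p) Finset.univ, ‖x (τ p)‖ ^ 2
      = ∑ q ∈ (Finset.filter (fun p => P p) Finset.univ).image τ, ‖x q‖ ^ 2 := by
    refine (Finset.sum_image (g := τ) (f := fun q => ‖x q‖ ^ 2) ?_).symm
    intro p hp p' hp' h
    exact hτ p p' (Finset.mem_filter.mp hp).2 (Finset.mem_filter.mp hp').2 h
  rw [himg]
  exact Finset.sum_le_sum_of_subset_of_nonneg (Finset.subset_univ _)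
    (fun _ _ _ => by positivity)

lemma frob_sumsq {α : Type*} [Fintype α] [DecidableEq α] (A : Matrix α α 𝕜)
    (hA : ∑ p, ∑ q, ‖A p q‖ ^ 2 ≤ 1) (x : α → 𝕜) :
    ∑ p, ‖A.mulVec x p‖ ^ 2 ≤ ∑ q, ‖x q‖ ^ 2 := by
  have key : ∀ p, ‖A.mulVec x p‖ ^ 2 ≤ (∑ q, ‖A p q‖ ^ 2) * (∑ q, ‖x q‖ ^ 2) := by
    intro p
    have h1 : ‖A.mulVec x p‖ ≤ ∑ q, ‖A p q‖ * ‖x q‖ := by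
      refine (norm_sum_le _ _).trans ?_
      exact Finset.sum_le_sum fun q _ => norm_mul_le _ _
    calc ‖A.mulVec x p‖ ^ 2 ≤ (∑ q, ‖A p q‖ * ‖x q‖) ^ 2 := by
          apply pow_le_pow_left₀ (norm_nonneg _) h1
      _ ≤ (∑ q, ‖A p q‖ ^ 2) * (∑ q, ‖x q‖ ^ 2) :=
          Finset.sum_mul_sq_le_sq_mul_sq _ _ _
  calc ∑ p, ‖A.mulVec x p‖ ^ 2 ≤ ∑ p, (∑ q, ‖A p q‖ ^ 2) * (∑ q, ‖x q‖ ^ 2) :=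
        Finset.sum_le_sum fun p _ => key p
    _ = (∑ p, ∑ q, ‖A p q‖ ^ 2) * (∑ q, ‖x q‖ ^ 2) := by rw [Finset.sum_mul]
    _ ≤ 1 * (∑ q, ‖x q‖ ^ 2) := by
        apply mul_le_mul_of_nonneg_right hA (by positivity)
    _ = _ := one_mul _

end Helpers

namespace CBB
variable {𝕜 : Type*} [RCLike 𝕜] {n d : ℕ}

abbrev S (n d : ℕ) := Fin (d+1) × (Fin d → Fin n)

def rr (c : (Fin d → Fin n) → 𝕜) (s : Fin d) (j : Fin n) : ℝ :=
  Real.sqrt (∑ i ∈ Finset.univ.filter fun i : Fin d → Fin n => i s = j, ‖c i‖ ^ 2)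

lemma rr_nonneg (c : (Fin d → Fin n) → 𝕜) (s : Fin d) (j : Fin n) : 0 ≤ rr c s j :=
  Real.sqrt_nonneg _

lemma rr_sq (c : (Fin d → Fin n) → 𝕜) (s : Fin d) (j : Fin n) :
    rr c s j ^ 2 = ∑ i ∈ Finset.univ.filter fun i : Fin d → Fin n => i s = j, ‖c i‖ ^ 2 :=
  Real.sq_sqrt (Finset.sum_nonneg fun _ _ => by positivity)

variable [NeZero n] (c : (Fin d → Fin n) → 𝕜) (s : Fin d)

def X (t : Fin d) (it : Fin n) : Matrix (S n d) (S n d) 𝕜 :=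
  if t = s then
    Matrix.of fun p q =>
      if q.1 = t.succ ∧ (∀ u, u ≤ s → q.2 u = 0) ∧ p.1 = t.castSucc ∧ (∀ u, s ≤ u → p.2 u = 0)
      then (starRingEnd 𝕜) (c fun u => if u < s then p.2 u else if u = s then it else q.2 u)
        / ((rr c s it : ℝ) : 𝕜)
      else 0
  else if s < t then
    Matrix.of fun p q =>
      if (p.1 = t.castSucc ∧ p.2 t = it) ∧ q = (t.succ, Function.update p.2 t 0)
      then (1:𝕜) else 0
  else
    Matrix.of fun p q =>
      if (p.1 = t.castSucc ∧ p.2 t = 0) ∧ q = (t.succ, Function.update p.2 t it)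
      then (1:𝕜) else 0

def v (i : Fin d → Fin n) (t : Fin (d+1)) : S n d → 𝕜 :=
  if s.castSucc < t then
    fun p => if p.1 = t ∧ p.2 = (fun u => if t ≤ u.castSucc then i u else 0) then 1 else 0
  else
    fun p => if p.1 = t ∧ (∀ u, t ≤ u.castSucc → p.2 u = 0)
      then (starRingEnd 𝕜) (c fun u => if u.castSucc < t then p.2 u else i u)
        / ((rr c s (i s) : ℝ) : 𝕜)
      else 0

lemma v_last (i : Fin d → Fin n) :
    v c s i (Fin.last d) = fun p => if p = (Fin.last d, fun _ => 0) then 1 else 0 := by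
  have h : s.castSucc < Fin.last d := by
    simpa [Fin.lt_def] using s.2
  funext p
  simp only [v, if_pos h]
  have h2 : (fun u : Fin d => if Fin.last d ≤ u.castSucc then i u else 0) = fun _ => (0 : Fin n) := by
    funext u
    have : ¬ Fin.last d ≤ u.castSucc := by
      simpa [Fin.le_def] using u.2
    simp [this]
  rw [h2]
  by_cases hp : p = (Fin.last d, fun _ => 0)
  · simp [hp]
  · rw [if_neg hp, if_neg (fun hc => hp (Prod.ext hc.1 hc.2))]

lemma v_zero (i : Fin d → Fin n) :
    v c s i 0 = fun p => if p = ((0 : Fin (d+1)), fun _ => 0) then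
      (starRingEnd 𝕜) (c i) / ((rr c s (i s) : ℝ) : 𝕜) else 0 := by
  have h : ¬ s.castSucc < (0 : Fin (d+1)) := by simp
  funext p
  simp only [v, if_neg h]
  have hc : (∀ u : Fin d, (0:Fin (d+1)) ≤ u.castSucc → p.2 u = 0) ↔ p.2 = fun _ => 0 := by
    constructor
    · intro hu; funext u; exact hu u (by simp [Fin.le_def])
    · intro hu u _; rw [hu]
  by_cases hp : p = ((0 : Fin (d+1)), fun _ => 0)
  · subst hp
    simp only [Prod.ext_iff] at *
    have : (fun u : Fin d => if u.castSucc < (0:Fin (d+1)) then (0:Fin n) else i u) = i := by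
      funext u; simp [Fin.lt_def]
    simp [this, hc]
  · rw [if_neg hp]
    rw [Prod.ext_iff] at hp
    push_neg at hp
    by_cases h1 : p.1 = (0 : Fin (d+1))
    · have h2 : ¬ p.2 = fun _ => 0 := hp h1
      rw [if_neg (by rw [hc]; tauto)]
    · rw [if_neg (by tauto)]

lemma chain_gt (i : Fin d → Fin n) (t : Fin d) (ht : s < t) :
    (X c s t (i t)).mulVec (v c s i t.succ) = v c s i t.castSucc := by
  have hts : ¬ t = s := ne_of_gt ht
  have ht' : (s : ℕ) < (t : ℕ) := ht
  rw [X, if_neg hts, if_pos ht]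
  rw [mulVec_rowform (P := fun p : S n d => p.1 = t.castSucc ∧ p.2 t = i t)
        (τ := fun p => (t.succ, Function.update p.2 t 0))]
  have h1 : s.castSucc < t.succ := by
    simp only [Fin.lt_def, Fin.coe_castSucc, Fin.val_succ]; omega
  have h2 : s.castSucc < t.castSucc := by
    simp only [Fin.lt_def, Fin.coe_castSucc]; omega
  funext p
  simp only [v, if_pos h1, if_pos h2]
  -- key function identities
  have key : ∀ g : Fin d → Fin n, g t = i t →
      (Function.update g t 0 = (fun u => if t.succ ≤ u.castSucc then i u else 0)
        ↔ g = (fun u => if t.castSucc ≤ u.castSucc then i u else 0)) := by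
    intro g hg
    constructor
    · intro h
      funext u
      rcases eq_or_ne u t with rfl | hu
      · simp only [hg]
        rw [if_pos (le_refl _)]
      · have := congrFun h u
        rw [Function.update_of_ne hu] at this
        rw [this]
        have hiff : (t.succ ≤ u.castSucc) ↔ (t.castSucc ≤ u.castSucc) := by
          simp only [Fin.le_def, Fin.coe_castSucc, Fin.val_succ]
          have : (u : ℕ) ≠ (t : ℕ) := fun hc => hu (Fin.ext hc)
          omega
        by_cases hc : t.succ ≤ u.castSucc
        · rw [if_pos hc, if_pos (hiff.mp hc)]
        · rw [if_neg hc, if_neg (fun hc2 => hc (hiff.mpr hc2))]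
    · intro h
      funext u
      rcases eq_or_ne u t with rfl | hu
      · rw [Function.update_self]
        rw [if_neg (by simp only [Fin.le_def, Fin.coe_castSucc, Fin.val_succ]; omega)]
      · rw [Function.update_of_ne hu, congrFun h u]
        have hiff : (t.succ ≤ u.castSucc) ↔ (t.castSucc ≤ u.castSucc) := by
          simp only [Fin.le_def, Fin.coe_castSucc, Fin.val_succ]
          have : (u : ℕ) ≠ (t : ℕ) := fun hc => hu (Fin.ext hc)
          omega
        by_cases hc : t.succ ≤ u.castSucc
        · rw [if_pos (hiff.mp hc), if_pos hc]
        · rw [if_neg (fun hc2 => hc (hiff.mpr hc2)), if_neg hc]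
  by_cases hP : p.1 = t.castSucc ∧ p.2 t = i t
  · rw [if_pos hP]
    by_cases hC : Function.update p.2 t 0 = (fun u => if t.succ ≤ u.castSucc then i u else 0)
    · rw [if_pos ⟨trivial, hC⟩, if_pos ⟨hP.1, (key p.2 hP.2).mp hC⟩]
    · rw [if_neg (fun hc => hC hc.2), if_neg (fun hc => hC ((key p.2 hP.2).mpr hc.2))]
  · rw [if_neg hP]
    rw [if_neg (fun hc => hP ⟨hc.1, by rw [congrFun hc.2 t, if_pos (le_refl _)]⟩)]

lemma chain_lt (i : Fin d → Fin n) (t : Fin d) (ht : t < s) :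
    (X c s t (i t)).mulVec (v c s i t.succ) = v c s i t.castSucc := by
  have hts : ¬ t = s := ne_of_lt ht
  have hns : ¬ s < t := not_lt_of_gt ht
  have ht' : (t : ℕ) < (s : ℕ) := ht
  rw [X, if_neg hts, if_neg hns]
  rw [mulVec_rowform (P := fun p : S n d => p.1 = t.castSucc ∧ p.2 t = 0)
        (τ := fun p => (t.succ, Function.update p.2 t (i t)))]
  have hv1 : ¬ s.castSucc < t.succ := by
    simp only [Fin.lt_def, Fin.coe_castSucc, Fin.val_succ, not_lt]; omega
  have hv2 : ¬ s.castSucc < t.castSucc := by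
    simp only [Fin.lt_def, Fin.coe_castSucc, not_lt]; omega
  funext p
  simp only [v, if_neg hv1, if_neg hv2]
  have E2 : (fun u => if u.castSucc < t.succ then Function.update p.2 t (i t) u else i u)
      = (fun u => if u.castSucc < t.castSucc then p.2 u else i u) := by
    funext u
    rcases lt_trichotomy (u : ℕ) (t : ℕ) with hu | hu | hu
    · have hut : u ≠ t := fun hc => by rw [hc] at hu; omega
      rw [if_pos (by simp only [Fin.lt_def, Fin.coe_castSucc, Fin.val_succ]; omega),
        if_pos (by simp only [Fin.lt_def, Fin.coe_castSucc]; exact hu),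
        Function.update_of_ne hut]
    · have hut : u = t := Fin.ext hu
      subst hut
      rw [if_pos (by simp only [Fin.lt_def, Fin.coe_castSucc, Fin.val_succ]; omega),
        if_neg (by simp only [Fin.lt_def, Fin.coe_castSucc]; omega),
        Function.update_self]
    · rw [if_neg (by simp only [Fin.lt_def, Fin.coe_castSucc, Fin.val_succ, not_lt]; omega),
        if_neg (by simp only [Fin.lt_def, Fin.coe_castSucc, not_lt]; omega)]
  by_cases hP : p.1 = t.castSucc ∧ (∀ u, t.castSucc ≤ u.castSucc → p.2 u = 0)
  · have hpt : p.2 t = 0 := hP.2 t (le_refl _)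
    have hin : ∀ u : Fin d, t.succ ≤ u.castSucc → Function.update p.2 t (i t) u = 0 := by
      intro u hu
      have hu' : (t : ℕ) + 1 ≤ (u : ℕ) := by
        simpa only [Fin.le_def, Fin.coe_castSucc, Fin.val_succ] using hu
      have hut : u ≠ t := fun hc => by rw [hc] at hu'; omega
      rw [Function.update_of_ne hut]
      exact hP.2 u (by simp only [Fin.le_def, Fin.coe_castSucc]; omega)
    rw [if_pos ⟨hP.1, hpt⟩, if_pos ⟨trivial, hin⟩, if_pos hP, E2]
  · rw [if_neg hP]
    by_cases hQ : p.1 = t.castSucc ∧ p.2 t = 0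
    · rw [if_pos hQ]
      have hni : ¬ (∀ u : Fin d, t.succ ≤ u.castSucc → Function.update p.2 t (i t) u = 0) := by
        intro hin
        apply hP
        refine ⟨hQ.1, fun u hu => ?_⟩
        have hu' : (t : ℕ) ≤ (u : ℕ) := by
          simpa only [Fin.le_def, Fin.coe_castSucc] using hu
        rcases eq_or_ne u t with rfl | hut
        · exact hQ.2
        · have hut' : (t : ℕ) + 1 ≤ (u : ℕ) := by
            have : (u : ℕ) ≠ (t : ℕ) := fun hc => hut (Fin.ext hc)
            omega
          have := hin u (by simp only [Fin.le_def, Fin.coe_castSucc, Fin.val_succ]; omega)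
          rwa [Function.update_of_ne hut] at this
      rw [if_neg (fun hc => hni hc.2)]
    · rw [if_neg hQ]

lemma mulVec_single {α : Type*} [Fintype α] [DecidableEq α] (A : Matrix α α 𝕜) (q₀ : α) :
    A.mulVec (fun q => if q = q₀ then (1:𝕜) else 0) = fun p => A p q₀ := by
  funext p
  simp only [Matrix.mulVec, dotProduct, mul_ite, mul_one, mul_zero]
  rw [Finset.sum_ite_eq' Finset.univ q₀ (fun q => A p q)]
  simp

lemma chain_eq (i : Fin d → Fin n) :
    (X c s s (i s)).mulVec (v c s i s.succ) = v c s i s.castSucc := by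
  rw [X, if_pos rfl]
  have hv1 : s.castSucc < s.succ := by
    simp only [Fin.lt_def, Fin.coe_castSucc, Fin.val_succ]; omega
  have hv2 : ¬ s.castSucc < s.castSucc := lt_irrefl _
  have hvs : v c s i s.succ = fun q : S n d =>
      if q = ((s.succ, fun u => if s.succ ≤ u.castSucc then i u else 0) : S n d)
      then (1:𝕜) else 0 := by
    funext q
    rw [v, if_pos hv1]
    exact if_congr (Iff.symm Prod.ext_iff) rfl rfl
  rw [hvs, mulVec_single]
  funext p
  conv_rhs => rw [v, if_neg hv2]
  show (if s.succ = s.succ ∧ (∀ u, u ≤ s → (if s.succ ≤ u.castSucc then i u else (0 : Fin n)) = 0)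
        ∧ p.1 = s.castSucc ∧ (∀ u, s ≤ u → p.2 u = 0)
      then (starRingEnd 𝕜) (c fun u => if u < s then p.2 u else if u = s then i s
          else (if s.succ ≤ u.castSucc then i u else 0)) / ((rr c s (i s) : ℝ) : 𝕜)
      else 0)
    = (if p.1 = s.castSucc ∧ (∀ u : Fin d, s.castSucc ≤ u.castSucc → p.2 u = 0)
      then (starRingEnd 𝕜) (c fun u => if u.castSucc < s.castSucc then p.2 u else i u)
          / ((rr c s (i s) : ℝ) : 𝕜)
      else 0)
  have hq1 : ∀ u : Fin d, u ≤ s → (if s.succ ≤ u.castSucc then i u else (0:Fin n)) = 0 := by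
    intro u hu
    have hu' : (u : ℕ) ≤ (s : ℕ) := hu
    rw [if_neg (by simp only [Fin.le_def, Fin.coe_castSucc, Fin.val_succ, not_le]; omega)]
  have Eval : (fun u => if u < s then p.2 u else if u = s then i s
        else (if s.succ ≤ u.castSucc then i u else (0:Fin n)))
      = (fun u => if u.castSucc < s.castSucc then p.2 u else i u) := by
    funext u
    rcases lt_trichotomy (u : ℕ) (s : ℕ) with hu | hu | hu
    · rw [if_pos (show u < s from hu), if_pos (by simp only [Fin.lt_def, Fin.coe_castSucc]; exact hu)]
    · have : u = s := Fin.ext hu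
      subst this
      rw [if_neg (lt_irrefl _), if_pos rfl,
        if_neg (by simp only [Fin.lt_def, Fin.coe_castSucc]; omega)]
    · have hus : ¬ u = s := fun hc => by rw [hc] at hu; omega
      rw [if_neg (by simp only [Fin.lt_def]; omega), if_neg hus,
        if_pos (by simp only [Fin.le_def, Fin.coe_castSucc, Fin.val_succ]; omega),
        if_neg (by simp only [Fin.lt_def, Fin.coe_castSucc, not_lt]; omega)]
  have hcond : (∀ u : Fin d, s ≤ u → p.2 u = 0) ↔ (∀ u : Fin d, s.castSucc ≤ u.castSucc → p.2 u = 0) := by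
    constructor
    · intro h u hu
      exact h u (by simpa only [Fin.le_def, Fin.coe_castSucc] using hu)
    · intro h u hu
      exact h u (by simpa only [Fin.le_def, Fin.coe_castSucc] using hu)
  by_cases hP : p.1 = s.castSucc ∧ (∀ u : Fin d, s ≤ u → p.2 u = 0)
  · rw [if_pos ⟨rfl, hq1, hP.1, hP.2⟩, if_pos ⟨hP.1, hcond.mp hP.2⟩, Eval]
  · rw [if_neg (fun hc => hP ⟨hc.2.2.1, hc.2.2.2⟩), if_neg (fun hc => hP ⟨hc.1, hcond.mpr hc.2⟩)]

lemma list_chain {α : Type*} [Fintype α] [DecidableEq α] :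
    ∀ (d : ℕ) (M : Fin d → Matrix α α 𝕜) (w : Fin (d+1) → α → 𝕜),
    (∀ t, (M t).mulVec (w t.succ) = w t.castSucc) →
    (List.ofFn M).prod.mulVec (w (Fin.last d)) = w 0
  | 0, M, w, _ => by
      simp only [List.ofFn_zero, List.prod_nil, Matrix.one_mulVec]
      rfl
  | (d+1), M, w, h => by
      rw [List.ofFn_succ, List.prod_cons, ← Matrix.mulVec_mulVec]
      have hrec := list_chain d (fun t => M t.succ) (fun u => w u.succ) (fun t => by
        have h2 := h t.succ
        rw [← Fin.succ_castSucc] at h2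
        exact h2)
      rw [show Fin.last (d+1) = (Fin.last d).succ from rfl] at *
      rw [hrec]
      have h0 := h 0
      rw [Fin.castSucc_zero] at h0
      exact h0

lemma X_norm_le_ne (t : Fin d) (it : Fin n) (hts : ¬ t = s) (x : S n d → 𝕜) :
    ∑ p, ‖(X c s t it).mulVec x p‖ ^ 2 ≤ ∑ q, ‖x q‖ ^ 2 := by
  by_cases hst : s < t
  · rw [X, if_neg hts, if_pos hst]
    refine rowform_sumsq (fun p : S n d => p.1 = t.castSucc ∧ p.2 t = it)
      (fun p => (t.succ, Function.update p.2 t 0)) ?_ x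
    intro p p' hp hp' h
    have h2 : Function.update p.2 t 0 = Function.update p'.2 t 0 := congrArg Prod.snd h
    refine Prod.ext (hp.1.trans hp'.1.symm) (funext fun u => ?_)
    rcases eq_or_ne u t with rfl | hu
    · rw [hp.2, hp'.2]
    · have := congrFun h2 u
      rwa [Function.update_of_ne hu, Function.update_of_ne hu] at this
  · rw [X, if_neg hts, if_neg hst]
    refine rowform_sumsq (fun p : S n d => p.1 = t.castSucc ∧ p.2 t = 0)
      (fun p => (t.succ, Function.update p.2 t it)) ?_ x
    intro p p' hp hp' h
    have h2 : Function.update p.2 t it = Function.update p'.2 t it := congrArg Prod.snd h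
    refine Prod.ext (hp.1.trans hp'.1.symm) (funext fun u => ?_)
    rcases eq_or_ne u t with rfl | hu
    · rw [hp.2, hp'.2]
    · have := congrFun h2 u
      rwa [Function.update_of_ne hu, Function.update_of_ne hu] at this

lemma X_frob (it : Fin n) :
    ∑ p : S n d, ∑ q : S n d, ‖X c s s it p q‖ ^ 2 ≤ 1 := by
  have hent : ∀ p q : S n d, ‖X c s s it p q‖ ^ 2 =
      if q.1 = s.succ ∧ (∀ u, u ≤ s → q.2 u = 0) ∧ p.1 = s.castSucc ∧ (∀ u, s ≤ u → p.2 u = 0)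
      then ‖c fun u => if u < s then p.2 u else if u = s then it else q.2 u‖ ^ 2 / (rr c s it) ^ 2
      else 0 := by
    intro p q
    rw [X, if_pos rfl]
    by_cases h : q.1 = s.succ ∧ (∀ u, u ≤ s → q.2 u = 0) ∧ p.1 = s.castSucc ∧ (∀ u, s ≤ u → p.2 u = 0)
    · rw [Matrix.of_apply, if_pos h, if_pos h, norm_div, RCLike.norm_conj, RCLike.norm_ofReal,
        abs_of_nonneg (rr_nonneg c s it), div_pow]
    · rw [Matrix.of_apply, if_neg h, if_neg h, norm_zero]
      exact (zero_pow two_ne_zero)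
  simp only [hent]
  rw [← Fintype.sum_prod_type']
  rw [← Finset.sum_filter]
  have hbij : ∑ x ∈ Finset.univ.filter (fun x : S n d × S n d =>
        x.2.1 = s.succ ∧ (∀ u, u ≤ s → x.2.2 u = 0) ∧ x.1.1 = s.castSucc ∧ (∀ u, s ≤ u → x.1.2 u = 0)),
        ‖c fun u => if u < s then x.1.2 u else if u = s then it else x.2.2 u‖ ^ 2 / (rr c s it) ^ 2
      = ∑ i' ∈ Finset.univ.filter (fun i' : Fin d → Fin n => i' s = it),
        ‖c i'‖ ^ 2 / (rr c s it) ^ 2 := by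
    refine Finset.sum_nbij'
      (fun x => fun u => if u < s then x.1.2 u else if u = s then it else x.2.2 u)
      (fun i' => ((s.castSucc, fun u => if u < s then i' u else 0),
                  (s.succ, fun u => if s < u then i' u else 0)))
      ?_ ?_ ?_ ?_ ?_
    · intro x hx
      simp only [Finset.mem_filter, Finset.mem_univ, true_and]
      simp
    · intro i' hi'
      simp only [Finset.mem_filter, Finset.mem_univ, true_and]
      constructor
      · intro u hu
        exact if_neg (not_lt_of_ge hu)
      · intro u hu
        exact if_neg (not_lt_of_ge hu)
    · intro x hx
      simp only [Finset.mem_filter, Finset.mem_univ, true_and] at hx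
      obtain ⟨h1, h2, h3, h4⟩ := hx
      refine Prod.ext (Prod.ext h3.symm ?_) (Prod.ext h1.symm ?_)
      · funext u
        by_cases hu : u < s
        · simp [hu]
        · simp [hu, h4 u (not_lt.mp hu)]
      · funext u
        by_cases hu : s < u
        · simp [hu, hu.ne', not_lt_of_gt hu]
        · simp [hu, h2 u (not_lt.mp hu)]
    · intro i' hi'
      simp only [Finset.mem_filter, Finset.mem_univ, true_and] at hi'
      funext u
      rcases lt_trichotomy u s with hu | hu | hu
      · simp [hu]
      · subst hu
        simp [hi'.symm]
      · simp [hu, hu.ne', not_lt_of_gt hu]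
    · intro x hx
      rfl
  rw [hbij, ← Finset.sum_div, ← rr_sq c s it]
  rcases eq_or_ne (rr c s it) 0 with h | h
  · rw [h]
    norm_num
  · rw [div_self (pow_ne_zero 2 h)]


lemma norm_listprod_le {E : Type*} [NormedAddCommGroup E] [NormedSpace 𝕜 E]
    (l : List (E →L[𝕜] E)) (h : ∀ a ∈ l, ‖a‖ ≤ 1) : ‖l.prod‖ ≤ 1 := by
  induction l with
  | nil =>
    rw [List.prod_nil]; exact ContinuousLinearMap.norm_id_le (𝕜 := 𝕜) (E := E)
  | cons a l ih =>
    rw [List.prod_cons]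
    calc ‖a * l.prod‖ ≤ ‖a‖ * ‖l.prod‖ := norm_mul_le _ _
      _ ≤ 1 * 1 := by
          apply mul_le_mul (h a List.mem_cons_self)
            (ih fun b hb => h b (List.mem_cons_of_mem a hb)) (norm_nonneg _) zero_le_one
      _ = 1 := one_mul 1

omit [NeZero n] in
lemma cbNorm_bddAbove (c : (Fin d → Fin n) → 𝕜) :
    BddAbove {r : ℝ | ∃ (m : ℕ) (X : Fin d → Fin n → Matrix (Fin m) (Fin m) 𝕜),
      (∀ s i, opNormK (X s i) ≤ 1) ∧
      r = opNormK (∑ i : Fin d → Fin n, c i • (List.ofFn fun s => X s (i s)).prod)} := by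
  refine ⟨∑ i : Fin d → Fin n, ‖c i‖, ?_⟩
  rintro r ⟨m, Y, hY, rfl⟩
  have hmap : Matrix.toEuclideanCLM (𝕜 := 𝕜)
        (∑ i : Fin d → Fin n, c i • (List.ofFn fun t => Y t (i t)).prod)
      = ∑ i : Fin d → Fin n, c i •
        (List.ofFn fun t => Matrix.toEuclideanCLM (𝕜 := 𝕜) (Y t (i t))).prod := by
    rw [map_sum]
    refine Finset.sum_congr rfl fun i _ => ?_
    rw [map_smul, map_list_prod, List.map_ofFn]
    rfl
  unfold opNormK
  rw [hmap]
  refine (norm_sum_le _ _).trans ?_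
  refine Finset.sum_le_sum fun i _ => ?_
  refine le_trans (norm_smul_le (c i)
    ((List.ofFn fun t => Matrix.toEuclideanCLM (𝕜 := 𝕜) (Y t (i t))).prod)) ?_
  calc ‖c i‖ * ‖(List.ofFn fun t => Matrix.toEuclideanCLM (𝕜 := 𝕜) (Y t (i t))).prod‖
      ≤ ‖c i‖ * 1 := by
        apply mul_le_mul_of_nonneg_left ?_ (norm_nonneg _)
        apply norm_listprod_le
        intro a ha
        rw [List.mem_ofFn] at ha
        obtain ⟨t, rfl⟩ := ha
        exact hY t (i t)
    _ = ‖c i‖ := mul_one _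

lemma submatrix_list_prod {α β : Type*} [Fintype α] [Fintype β] [DecidableEq α] [DecidableEq β]
    (e : α ≃ β) :
    ∀ l : List (Matrix β β 𝕜), (l.prod).submatrix e e = (l.map fun A => A.submatrix e e).prod
  | [] => by simp [Matrix.submatrix_one_equiv]
  | a :: l => by
    rw [List.prod_cons, List.map_cons, List.prod_cons, ← submatrix_list_prod e l,
      Matrix.submatrix_mul_equiv]

lemma sum_mulVec {α β : Type*} [Fintype α] [Fintype β] [DecidableEq α]
    (A : β → Matrix α α 𝕜) (y : α → 𝕜) :
    (∑ b : β, A b).mulVec y = ∑ b : β, (A b).mulVec y := by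
  funext p
  simp [Matrix.mulVec, dotProduct, Matrix.sum_apply, Finset.sum_mul]
  rw [Finset.sum_comm]

theorem cb_ge (c : (Fin d → Fin n) → 𝕜) (s : Fin d) :
    ∑ j : Fin n, rr c s j ≤ cbNorm c := by
  classical
  set m := Fintype.card (S n d) with hm
  set e : S n d ≃ Fin m := Fintype.equivFin (S n d) with he
  set Y : Fin d → Fin n → Matrix (Fin m) (Fin m) 𝕜 :=
    fun t it => (X c s t it).submatrix e.symm e.symm with hY
  have hYle : ∀ t it, opNormK (Y t it) ≤ 1 := by
    intro t it
    rw [hY]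
    rw [opNormK_submatrix e.symm (X c s t it)]
    rcases eq_or_ne t s with rfl | hts
    · exact bridgeUp _ (frob_sumsq _ (X_frob c t it))
    · exact bridgeUp _ (X_norm_le_ne c s t it hts)
  set σ : Matrix (S n d) (S n d) 𝕜 :=
    ∑ i : Fin d → Fin n, c i • (List.ofFn fun t => X c s t (i t)).prod with hσ
  have hσ' : (∑ i : Fin d → Fin n, c i • (List.ofFn fun t => Y t (i t)).prod)
      = σ.submatrix e.symm e.symm := by
    rw [hσ]
    ext p q
    simp only [Matrix.submatrix_apply, Matrix.sum_apply, Matrix.smul_apply, smul_eq_mul]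
    refine Finset.sum_congr rfl fun i _ => ?_
    congr 1
    rw [show (List.ofFn fun t => Y t (i t))
        = (List.ofFn fun t => X c s t (i t)).map (fun A => A.submatrix e.symm e.symm) from by
      rw [List.map_ofFn]; rfl]
    rw [← submatrix_list_prod e.symm]
    rfl
  have hmem : opNormK (∑ i : Fin d → Fin n, c i • (List.ofFn fun t => Y t (i t)).prod)
      ∈ {r : ℝ | ∃ (m : ℕ) (X : Fin d → Fin n → Matrix (Fin m) (Fin m) 𝕜),
        (∀ s i, opNormK (X s i) ≤ 1) ∧
        r = opNormK (∑ i : Fin d → Fin n, c i • (List.ofFn fun s => X s (i s)).prod)} :=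
    ⟨m, Y, hYle, rfl⟩
  have hcb := le_csSup (cbNorm_bddAbove c) hmem
  refine le_trans ?_ hcb
  rw [hσ', opNormK_submatrix e.symm σ]
  -- now show ∑ j, rr c s j ≤ opNormK σ
  set y : S n d → 𝕜 := fun q => if q = ((Fin.last d, fun _ => 0) : S n d) then 1 else 0 with hy
  have hynorm : ∑ q, ‖y q‖ ^ 2 = 1 := by
    have : ∀ q : S n d, ‖y q‖ ^ 2
        = if q = ((Fin.last d, fun _ => 0) : S n d) then (1:ℝ) else 0 := by
      intro q
      rw [hy]
      by_cases h : q = ((Fin.last d, fun _ => 0) : S n d) <;> simp [h]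
    simp only [this]
    rw [Finset.sum_ite_eq' Finset.univ _ (fun _ => (1:ℝ))]
    simp
  have hchain : ∀ i : Fin d → Fin n,
      ((List.ofFn fun t => X c s t (i t)).prod).mulVec y = v c s i 0 := by
    intro i
    have hvl : y = v c s i (Fin.last d) := by rw [v_last c s i]
    rw [hvl]
    refine list_chain d (fun t => X c s t (i t)) (v c s i) ?_
    intro t
    rcases lt_trichotomy t s with h | h | h
    · exact chain_lt c s i t h
    · subst h
      exact chain_eq c t i
    · exact chain_gt c s i t h
  have hσy : σ.mulVec y = ∑ i : Fin d → Fin n, c i • v c s i 0 := by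
    rw [hσ, sum_mulVec]
    refine Finset.sum_congr rfl fun i _ => ?_
    rw [Matrix.smul_mulVec, hchain i]
  have hcoord : σ.mulVec y ((0 : Fin (d+1)), fun _ => 0)
      = ((∑ j : Fin n, rr c s j : ℝ) : 𝕜) := by
    rw [hσy]
    have h1 : (∑ i : Fin d → Fin n, c i • v c s i 0) ((0 : Fin (d+1)), fun _ => 0)
        = ∑ i : Fin d → Fin n, c i * ((starRingEnd 𝕜) (c i) / ((rr c s (i s) : ℝ) : 𝕜)) := by
      rw [Finset.sum_apply]
      refine Finset.sum_congr rfl fun i _ => ?_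
      rw [Pi.smul_apply, v_zero c s i]
      simp
    rw [h1]
    have h2 : ∀ i : Fin d → Fin n,
        c i * ((starRingEnd 𝕜) (c i) / ((rr c s (i s) : ℝ) : 𝕜))
        = ((‖c i‖ ^ 2 / rr c s (i s) : ℝ) : 𝕜) := by
      intro i
      rw [mul_div_assoc' ]
      rw [RCLike.mul_conj]
      rw [RCLike.ofReal_div]
      norm_cast
    simp only [h2]
    rw [← RCLike.ofReal_sum]
    congr 1
    rw [← Finset.sum_fiberwise Finset.univ (fun i : Fin d → Fin n => i s)
      (fun i => ‖c i‖ ^ 2 / rr c s (i s))]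
    refine Finset.sum_congr rfl fun j _ => ?_
    have h3 : ∑ i ∈ Finset.univ.filter (fun i : Fin d → Fin n => i s = j),
        ‖c i‖ ^ 2 / rr c s (i s)
        = (∑ i ∈ Finset.univ.filter (fun i : Fin d → Fin n => i s = j), ‖c i‖ ^ 2) / rr c s j := by
      rw [Finset.sum_div]
      refine Finset.sum_congr rfl fun i hi => ?_
      rw [(Finset.mem_filter.mp hi).2]
    rw [h3, ← rr_sq c s j]
    rcases eq_or_ne (rr c s j) 0 with h | h
    · rw [h]; simp
    · rw [sq, mul_div_assoc, div_self h, mul_one]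
  have hle1 : ∑ j : Fin n, rr c s j ≤ Real.sqrt (∑ p, ‖σ.mulVec y p‖ ^ 2) := by
    have hnn : 0 ≤ ∑ j : Fin n, rr c s j := Finset.sum_nonneg fun j _ => rr_nonneg c s j
    have : ∑ j : Fin n, rr c s j = ‖σ.mulVec y ((0 : Fin (d+1)), fun _ => 0)‖ := by
      rw [hcoord, RCLike.norm_ofReal, abs_of_nonneg hnn]
    rw [this]
    rw [show ‖σ.mulVec y ((0 : Fin (d+1)), fun _ => 0)‖
      = Real.sqrt (‖σ.mulVec y ((0 : Fin (d+1)), fun _ => 0)‖ ^ 2) from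
      (Real.sqrt_sq (norm_nonneg _)).symm]
    apply Real.sqrt_le_sqrt
    exact Finset.single_le_sum (f := fun p => ‖σ.mulVec y p‖ ^ 2)
      (fun p _ => by positivity) (Finset.mem_univ _)
  refine hle1.trans ?_
  have := bridgeDown σ y
  rw [hynorm, Real.sqrt_one, mul_one] at this
  exact this

end CBB



/-- **Lower bound for the completely bounded norm.** For `𝕜 ∈ {ℝ, ℂ}`, every `d`-linear form
`T : (𝕜^n)^d → 𝕜` and every `s ∈ [d]`,
`‖T‖_cb ≥ ∑_{i_s ∈ [n]} √(∑_{i₁,…,i_{s−1},i_{s+1},…,i_d} |T̂_{i₁,…,i_d}|²)`. -/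
theorem cbNorm_ge_mixed_sum {𝕜 : Type*} [RCLike 𝕜] {n d : ℕ}
    (T : MultilinearMap 𝕜 (fun _ : Fin d => (Fin n → 𝕜)) 𝕜) (s : Fin d) :
    ∑ j : Fin n,
        Real.sqrt (∑ i ∈ Finset.univ.filter fun i : Fin d → Fin n => i s = j,
          ‖mlCoeff T i‖ ^ 2) ≤ cbNorm (mlCoeff T) := by
  rcases Nat.eq_zero_or_pos n with hn | hn
  · subst hn
    rw [show (∑ j : Fin 0,
        Real.sqrt (∑ i ∈ Finset.univ.filter fun i : Fin d → Fin 0 => i s = j,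
          ‖mlCoeff T i‖ ^ 2)) = 0 from by simp]
    haveI : IsEmpty (Fin d → Fin 0) := ⟨fun f => (f s).elim0⟩
    refine le_csSup (CBB.cbNorm_bddAbove _) ?_
    refine ⟨0, fun _ _ => 0, fun t i => ?_, ?_⟩
    · unfold opNormK
      rw [map_zero, norm_zero]
      exact zero_le_one
    · rw [Finset.univ_eq_empty, Finset.sum_empty]
      unfold opNormK
      rw [map_zero, norm_zero]
  · haveI : NeZero n := ⟨hn.ne'⟩
    exact CBB.cb_ge (mlCoeff T) s
end
end

section
/- (Blei's inequality) Let 𝕂 ∈ {ℝ, ℂ} and let T̂ = (T̂_{i₁,…,i_d})_{i₁,…,i_d ∈ [n]} be any array in 𝕂^{n^d}. Then (∏_{s ∈ [d]} Σ_{i_s ∈ [n]} √(Σ_{i₁,…,i_{s−1},i_{s+1},…,i_d ∈ [n]} |T̂_{i₁,…,i_d}|²))^{1/d} ≥ (Σ_{i₁,…,i_d ∈ [n]} |T̂_{i₁,…,i_d}|^{2d/(d+1)})^{(d+1)/(2d)}. -/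
open Finset Real

/-- Generalized Hölder with equal exponents. -/
lemma gen_holder {ι κ : Type*} [Fintype ι] [Fintype κ] [Nonempty κ]
    (F : κ → ι → ℝ) (hF : ∀ t j, 0 ≤ F t j) :
    ∑ j : ι, ∏ t : κ, F t j ≤
      ∏ t : κ, (∑ j : ι, F t j ^ (Fintype.card κ : ℝ)) ^ ((Fintype.card κ : ℝ)⁻¹) := by
  set m : ℝ := (Fintype.card κ : ℝ) with hm
  have hm1 : (1 : ℝ) ≤ m := by
    rw [hm]; exact_mod_cast Fintype.card_pos
  have hm0 : 0 < m := lt_of_lt_of_le one_pos hm1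
  set S : κ → ℝ := fun t => ∑ j : ι, F t j ^ m with hS
  have hSnn : ∀ t, 0 ≤ S t := fun t => sum_nonneg fun j _ => rpow_nonneg (hF t j) m
  by_cases h0 : ∃ t, S t = 0
  · obtain ⟨t0, ht0⟩ := h0
    have hFz : ∀ j, F t0 j = 0 := by
      intro j
      have := (sum_eq_zero_iff_of_nonneg (fun j _ => rpow_nonneg (hF t0 j) m)).1 ht0 j (mem_univ j)
      have := (rpow_eq_zero (hF t0 j) (ne_of_gt hm0)).1 this
      exact this
    have hL : ∑ j : ι, ∏ t : κ, F t j = 0 := by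
      refine sum_eq_zero fun j _ => prod_eq_zero (mem_univ t0) (hFz j)
    rw [hL]
    exact prod_nonneg fun t _ => rpow_nonneg (hSnn t) _
  · push_neg at h0
    have hSpos : ∀ t, 0 < S t := fun t => lt_of_le_of_ne (hSnn t) (Ne.symm (h0 t))
    have key : ∀ j : ι, ∏ t : κ, F t j ≤
        (∏ t : κ, S t ^ (m⁻¹)) * ∑ t : κ, m⁻¹ * (F t j ^ m / S t) := by
      intro j
      have hgm := Real.geom_mean_le_arith_mean_weighted univ (fun _ => m⁻¹)
        (fun t => F t j ^ m / S t) (fun t _ => inv_nonneg.2 hm0.le)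
        (by rw [sum_const, card_univ, nsmul_eq_mul, ← hm, mul_inv_cancel₀ (ne_of_gt hm0)]) (fun t _ => div_nonneg (rpow_nonneg (hF t j) m) (hSnn t))
      calc ∏ t : κ, F t j
          = ∏ t : κ, (S t ^ (m⁻¹) * (F t j ^ m / S t) ^ (m⁻¹)) := by
            refine prod_congr rfl fun t _ => ?_
            rw [Real.div_rpow (rpow_nonneg (hF t j) m) (hSnn t),
              ← Real.rpow_mul (hF t j), mul_inv_cancel₀ (ne_of_gt hm0), Real.rpow_one]
            have hne : S t ^ (m⁻¹) ≠ 0 := (Real.rpow_pos_of_pos (hSpos t) m⁻¹).ne'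
            rw [eq_comm, mul_comm, div_mul_cancel₀ _ hne]
        _ = (∏ t : κ, S t ^ (m⁻¹)) * ∏ t : κ, (F t j ^ m / S t) ^ (m⁻¹) := by
            rw [prod_mul_distrib]
        _ ≤ (∏ t : κ, S t ^ (m⁻¹)) * ∑ t : κ, m⁻¹ * (F t j ^ m / S t) := by
            refine mul_le_mul_of_nonneg_left hgm (prod_nonneg fun t _ => rpow_nonneg (hSnn t) _)
    calc ∑ j : ι, ∏ t : κ, F t j
        ≤ ∑ j : ι, ((∏ t : κ, S t ^ (m⁻¹)) * ∑ t : κ, m⁻¹ * (F t j ^ m / S t)) :=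
          sum_le_sum fun j _ => key j
      _ = (∏ t : κ, S t ^ (m⁻¹)) * ∑ t : κ, m⁻¹ * (S t / S t) := by
          rw [← mul_sum]
          congr 1
          rw [Finset.sum_comm]
          refine sum_congr rfl fun t _ => ?_
          rw [← mul_sum, ← sum_div]
      _ = ∏ t : κ, S t ^ (m⁻¹) := by
          have : ∀ t : κ, S t / S t = 1 := fun t => div_self (ne_of_gt (hSpos t))
          simp only [this, mul_one, sum_const, card_univ, nsmul_eq_mul, ← hm]
          rw [mul_inv_cancel₀ (ne_of_gt hm0), mul_one]
      _ = ∏ t : κ, (∑ j : ι, F t j ^ m) ^ (m⁻¹) := rfl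

/-- Minkowski / triangle inequality in `ℓ²`. -/
lemma sqrt_sum_sq_sum_le {ι κ : Type*} [Fintype ι] [Fintype κ] (w : κ → ι → ℝ) :
    Real.sqrt (∑ j : ι, (∑ m : κ, w m j) ^ 2) ≤ ∑ m : κ, Real.sqrt (∑ j : ι, w m j ^ 2) := by
  have key : ‖∑ m : κ, (EuclideanSpace.equiv ι ℝ).symm (w m)‖ ≤
      ∑ m : κ, ‖(EuclideanSpace.equiv ι ℝ).symm (w m)‖ := norm_sum_le _ _
  have h1 : ∀ x : ι → ℝ, ‖(EuclideanSpace.equiv ι ℝ).symm x‖ = Real.sqrt (∑ j : ι, x j ^ 2) := by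
    intro x
    rw [EuclideanSpace.norm_eq]
    congr 1
    exact Finset.sum_congr rfl fun j _ => by rw [Real.norm_eq_abs, sq_abs]; rfl
  have h2 : (∑ m : κ, (EuclideanSpace.equiv ι ℝ).symm (w m)) =
      (EuclideanSpace.equiv ι ℝ).symm (fun j => ∑ m : κ, w m j) := by
    ext j
    simp [EuclideanSpace.equiv, WithLp.equiv]
  rw [h2, h1] at key
  simpa only [h1] using key

lemma sum_cons_decomp {n m : ℕ} (g : (Fin (m + 1) → Fin n) → ℝ) :
    ∑ i : Fin (m + 1) → Fin n, g i
      = ∑ j : Fin n, ∑ k : Fin m → Fin n, g (Fin.cons j k) := by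
  rw [← (Fin.consEquiv (fun _ : Fin (m + 1) => Fin n)).sum_comp g, Fintype.sum_prod_type]
  rfl

lemma blei_base {n : ℕ} (a : (Fin 1 → Fin n) → ℝ) (ha : ∀ i, 0 ≤ a i) :
    ∑ i : Fin 1 → Fin n, a i ^ (2 * ((0:ℝ) + 1) / ((0:ℝ) + 1 + 1)) ≤
      ∏ s : Fin 1, (∑ j : Fin n,
        Real.sqrt (∑ i ∈ Finset.univ.filter fun i : Fin 1 → Fin n => i s = j, a i ^ 2))
        ^ ((2 : ℝ) / ((0:ℝ) + 1 + 1)) := by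
  have he : (2 * ((0:ℝ) + 1) / ((0:ℝ) + 1 + 1)) = 1 := by norm_num
  have he2 : ((2 : ℝ) / ((0:ℝ) + 1 + 1)) = 1 := by norm_num
  rw [he, he2]
  simp only [Real.rpow_one, Fin.prod_univ_one]
  have hfil : ∀ j : Fin n, (Finset.univ.filter fun i : Fin 1 → Fin n => i 0 = j)
      = {fun _ => j} := by
    intro j
    ext i
    simp only [mem_filter, mem_univ, true_and, mem_singleton]
    constructor
    · intro h
      funext x
      rw [Subsingleton.elim x 0, h]
    · intro h; rw [h]
  refine le_of_eq ?_
  calc ∑ i : Fin 1 → Fin n, a i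
      = ∑ j : Fin n, a (fun _ => j) := by
        rw [← Equiv.sum_comp (Equiv.funUnique (Fin 1) (Fin n)).symm a]
        rfl
    _ = ∑ j : Fin n, Real.sqrt (∑ i ∈ Finset.univ.filter
          fun i : Fin 1 → Fin n => i 0 = j, a i ^ 2) := by
        refine Finset.sum_congr rfl fun j _ => ?_
        rw [hfil j, Finset.sum_singleton, Real.sqrt_sq (ha _)]
lemma blei_core : ∀ (m n : ℕ) (a : (Fin (m + 1) → Fin n) → ℝ), (∀ i, 0 ≤ a i) →
    ∑ i : Fin (m + 1) → Fin n, a i ^ (2 * ((m : ℝ) + 1) / ((m : ℝ) + 1 + 1)) ≤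
      ∏ s : Fin (m + 1), (∑ j : Fin n,
        Real.sqrt (∑ i ∈ Finset.univ.filter fun i : Fin (m + 1) → Fin n => i s = j, a i ^ 2))
        ^ ((2 : ℝ) / ((m : ℝ) + 1 + 1)) := by
  intro m
  induction m with
  | zero => exact fun n a ha => by simpa using blei_base a ha
  | succ d IH =>
    intro n a ha
    push_cast
    set M : ℝ := (d : ℝ) + 1 with hM
    have hM0 : (0 : ℝ) < M := by rw [hM]; positivity
    have hM1 : (0 : ℝ) < M + 1 := by linarith
    have hM2 : (0 : ℝ) < M + 1 + 1 := by linarith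
    -- abbreviations
    set b : Fin n → (Fin (d + 1) → Fin n) → ℝ := fun j k => a (Fin.cons j k) with hb
    have hbnn : ∀ j k, 0 ≤ b j k := fun j k => ha _
    set σ : ℝ := 2 * M / (M + 1) with hσ
    set ρ : ℝ := 2 * (M + 1) / (M + 1 + 1) with hρ
    have hρ0 : 0 < ρ := by rw [hρ]; positivity
    set u : Fin n → ℝ := fun j => ∑ k, b j k ^ σ with hu
    have hunn : ∀ j, 0 ≤ u j := fun j => sum_nonneg fun k _ => rpow_nonneg (hbnn j k) _
    set v : Fin n → ℝ := fun j => Real.sqrt (∑ k, b j k ^ 2) with hv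
    have hvnn : ∀ j, 0 ≤ v j := fun j => Real.sqrt_nonneg _
    set A : Fin (d + 1 + 1) → ℝ := fun s => ∑ j : Fin n,
      Real.sqrt (∑ i ∈ Finset.univ.filter fun i : Fin (d + 1 + 1) → Fin n => i s = j, a i ^ 2)
      with hA
    have hAnn : ∀ s, 0 ≤ A s := fun s => sum_nonneg fun j _ => Real.sqrt_nonneg _
    set B : Fin n → Fin (d + 1) → ℝ := fun j t => ∑ l : Fin n,
      Real.sqrt (∑ k ∈ Finset.univ.filter fun k : Fin (d + 1) → Fin n => k t = l, b j k ^ 2)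
      with hB
    have hBnn : ∀ j t, 0 ≤ B j t := fun j t => sum_nonneg fun l _ => Real.sqrt_nonneg _
    -- filtered sum decompositions
    have hfilter0 : ∀ j : Fin n,
        (∑ i ∈ Finset.univ.filter fun i : Fin (d + 1 + 1) → Fin n => i 0 = j, a i ^ 2)
          = ∑ k, b j k ^ 2 := by
      intro j
      rw [Finset.sum_filter,
        sum_cons_decomp (fun i : Fin (d + 1 + 1) → Fin n => if i 0 = j then a i ^ 2 else 0)]
      simp only [Fin.cons_zero]
      have hpull : ∀ j' : Fin n,
          (∑ k : Fin (d + 1) → Fin n, if j' = j then a (Fin.cons j' k) ^ 2 else 0)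
            = if j' = j then (∑ k : Fin (d + 1) → Fin n, a (Fin.cons j' k) ^ 2) else 0 := by
        intro j'; split <;> simp
      rw [Finset.sum_congr rfl fun j' _ => hpull j', Finset.sum_ite_eq' Finset.univ j
        (fun j' => ∑ k : Fin (d + 1) → Fin n, a (Fin.cons j' k) ^ 2)]
      simp [hb]
    have hfilters : ∀ (t : Fin (d + 1)) (l : Fin n),
        (∑ i ∈ Finset.univ.filter fun i : Fin (d + 1 + 1) → Fin n => i t.succ = l, a i ^ 2)
          = ∑ j : Fin n, ∑ k ∈ Finset.univ.filter fun k : Fin (d + 1) → Fin n => k t = l,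
              b j k ^ 2 := by
      intro t l
      rw [Finset.sum_filter,
        sum_cons_decomp (fun i : Fin (d + 1 + 1) → Fin n => if i t.succ = l then a i ^ 2 else 0)]
      simp only [Fin.cons_succ]
      exact Finset.sum_congr rfl fun j _ => (Finset.sum_filter _ _).symm
    -- Step 1: Hölder in the remaining variables, for each fixed first coordinate j
    have step1 : ∀ j : Fin n, (∑ k : Fin (d + 1) → Fin n, b j k ^ ρ)
        ≤ u j ^ ((M + 1) / (M + 1 + 1)) * v j ^ (2 / (M + 1 + 1)) := by
      intro j
      have hp₁ : (1:ℝ) < (M + 1 + 1) / (M + 1) := by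
        rw [lt_div_iff₀ hM1]; linarith
      have hconj : Real.HolderConjugate ((M + 1 + 1) / (M + 1)) (M + 1 + 1) :=
        Real.holderConjugate_iff.mpr ⟨hp₁, by field_simp⟩
      have h := Real.inner_le_Lp_mul_Lq_of_nonneg (Finset.univ) hconj
        (f := fun k => b j k ^ (2 * M / (M + 1 + 1)))
        (g := fun k => b j k ^ (2 / (M + 1 + 1)))
        (fun k _ => rpow_nonneg (hbnn j k) _) (fun k _ => rpow_nonneg (hbnn j k) _)
      have e1 : ∀ k, b j k ^ (2 * M / (M + 1 + 1)) * b j k ^ (2 / (M + 1 + 1)) = b j k ^ ρ := by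
        intro k
        rw [← Real.rpow_add' (hbnn j k)
          (ne_of_gt (add_pos (div_pos (by linarith) hM2) (div_pos two_pos hM2)))]
        congr 1
        rw [hρ]; field_simp
      have e2 : ∀ k, (b j k ^ (2 * M / (M + 1 + 1))) ^ ((M + 1 + 1) / (M + 1)) = b j k ^ σ := by
        intro k
        rw [← Real.rpow_mul (hbnn j k)]
        congr 1
        rw [hσ]; field_simp
      have e3 : ∀ k, (b j k ^ (2 / (M + 1 + 1))) ^ (M + 1 + 1) = b j k ^ (2:ℕ) := by
        intro k
        rw [← Real.rpow_mul (hbnn j k), div_mul_cancel₀ _ (ne_of_gt hM2),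
          show ((2:ℝ) = ((2:ℕ):ℝ)) by norm_num, Real.rpow_natCast]
      rw [Finset.sum_congr rfl fun k _ => e1 k, Finset.sum_congr rfl fun k _ => e2 k,
        Finset.sum_congr rfl fun k _ => e3 k] at h
      refine le_trans h (le_of_eq ?_)
      have hSnn : (0:ℝ) ≤ ∑ k : Fin (d + 1) → Fin n, b j k ^ 2 :=
        sum_nonneg fun k _ => sq_nonneg _
      congr 1
      · rw [one_div_div]
      · rw [show v j = √(∑ k : Fin (d + 1) → Fin n, b j k ^ 2) from rfl]
        conv_lhs => rw [← Real.sq_sqrt hSnn]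
        rw [← Real.rpow_natCast (√(∑ k : Fin (d + 1) → Fin n, b j k ^ 2)) 2,
          ← Real.rpow_mul (Real.sqrt_nonneg _)]
        norm_num
        rw [← div_eq_mul_inv]
    have hMne : M ≠ 0 := ne_of_gt hM0
    have hM1ne : M + 1 ≠ 0 := ne_of_gt hM1
    have hM2ne : M + 1 + 1 ≠ 0 := ne_of_gt hM2
    -- Step 2: Hölder over the first coordinate j
    have step2 : (∑ j : Fin n, u j ^ ((M + 1) / (M + 1 + 1)) * v j ^ (2 / (M + 1 + 1)))
        ≤ (∑ j : Fin n, u j ^ ((M + 1) / M)) ^ (M / (M + 1 + 1))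
          * (∑ j : Fin n, v j) ^ (2 / (M + 1 + 1)) := by
      have hp₂ : (1:ℝ) < (M + 1 + 1) / M := by rw [lt_div_iff₀ hM0]; linarith
      have hconj : Real.HolderConjugate ((M + 1 + 1) / M) ((M + 1 + 1) / 2) :=
        Real.holderConjugate_iff.mpr ⟨hp₂, by rw [inv_div, inv_div, div_add_div _ _ hM2ne hM2ne]; field_simp; ring⟩
      have h := Real.inner_le_Lp_mul_Lq_of_nonneg (Finset.univ) hconj
        (f := fun j => u j ^ ((M + 1) / (M + 1 + 1)))
        (g := fun j => v j ^ (2 / (M + 1 + 1)))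
        (fun j _ => rpow_nonneg (hunn j) _) (fun j _ => rpow_nonneg (hvnn j) _)
      have e1 : ∀ j, (u j ^ ((M + 1) / (M + 1 + 1))) ^ ((M + 1 + 1) / M)
          = u j ^ ((M + 1) / M) := by
        intro j
        rw [← Real.rpow_mul (hunn j)]
        congr 1
        field_simp
      have e2 : ∀ j, (v j ^ (2 / (M + 1 + 1))) ^ ((M + 1 + 1) / 2) = v j := by
        intro j
        rw [← Real.rpow_mul (hvnn j),
          show (2 / (M + 1 + 1)) * ((M + 1 + 1) / 2) = 1 by
            rw [div_mul_div_comm, mul_comm (M + 1 + 1) 2]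
            exact div_self (ne_of_gt (mul_pos two_pos hM2)),
          Real.rpow_one]
      rw [Finset.sum_congr rfl fun j _ => e1 j, Finset.sum_congr rfl fun j _ => e2 j,
        one_div_div, one_div_div] at h
      exact h
    -- Step 3: induction hypothesis applied to each slice
    have step3 : ∀ j : Fin n, u j ≤ ∏ t : Fin (d + 1), B j t ^ (2 / (M + 1)) :=
      fun j => IH n (b j) (hbnn j)
    -- Step 4a
    have step4a : ∀ j : Fin n, u j ^ ((M + 1) / M) ≤ ∏ t : Fin (d + 1), B j t ^ (2 / M) := by
      intro j
      have h := Real.rpow_le_rpow (hunn j) (step3 j) (le_of_lt (div_pos hM1 hM0))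
      refine le_trans h (le_of_eq ?_)
      rw [← Real.finset_prod_rpow _ _ (fun t _ => rpow_nonneg (hBnn j t) _) _]
      refine Finset.prod_congr rfl fun t _ => ?_
      rw [← Real.rpow_mul (hBnn j t)]
      congr 1
      field_simp
    -- Step 4c: Minkowski's inequality
    have step4c : ∀ t : Fin (d + 1), (∑ j : Fin n, B j t ^ 2) ≤ A t.succ ^ 2 := by
      intro t
      have hkey := sqrt_sum_sq_sum_le (fun l (j : Fin n) => √(∑ k ∈ Finset.univ.filter
        (fun k : Fin (d + 1) → Fin n => k t = l), b j k ^ 2))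
      have hR : ∀ l : Fin n,
          √(∑ j : Fin n, (√(∑ k ∈ Finset.univ.filter
              (fun k : Fin (d + 1) → Fin n => k t = l), b j k ^ 2)) ^ 2)
            = √(∑ i ∈ Finset.univ.filter
                (fun i : Fin (d + 1 + 1) → Fin n => i t.succ = l), a i ^ 2) := by
        intro l
        rw [Finset.sum_congr rfl fun j _ =>
          Real.sq_sqrt (sum_nonneg fun k _ => sq_nonneg (b j k)), hfilters t l]
      rw [Finset.sum_congr rfl fun l (_ : l ∈ Finset.univ) => hR l] at hkey
      have h2 : √(∑ j : Fin n, B j t ^ 2) ≤ A t.succ := hkey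
      calc (∑ j : Fin n, B j t ^ 2)
          = (√(∑ j : Fin n, B j t ^ 2)) ^ 2 :=
            (Real.sq_sqrt (sum_nonneg fun j _ => sq_nonneg _)).symm
        _ ≤ A t.succ ^ 2 := by
            exact pow_le_pow_left₀ (Real.sqrt_nonneg _) h2 2
    -- Step 4: combining via generalized Hölder
    have step4 : (∑ j : Fin n, u j ^ ((M + 1) / M))
        ≤ ∏ t : Fin (d + 1), ((A t.succ) ^ 2) ^ (M⁻¹) := by
      have hcard : ((Fintype.card (Fin (d + 1)) : ℝ)) = M := by
        rw [Fintype.card_fin, hM]; push_cast; ring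
      calc ∑ j : Fin n, u j ^ ((M + 1) / M)
          ≤ ∑ j : Fin n, ∏ t : Fin (d + 1), B j t ^ (2 / M) :=
            sum_le_sum fun j _ => step4a j
        _ ≤ ∏ t : Fin (d + 1), (∑ j : Fin n, (B j t ^ (2 / M))
              ^ ((Fintype.card (Fin (d + 1)) : ℝ))) ^ ((Fintype.card (Fin (d + 1)) : ℝ))⁻¹ :=
            gen_holder (fun t j => B j t ^ (2 / M)) (fun t j => rpow_nonneg (hBnn j t) _)
        _ = ∏ t : Fin (d + 1), (∑ j : Fin n, B j t ^ 2) ^ (M⁻¹) := by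
            refine Finset.prod_congr rfl fun t _ => ?_
            rw [hcard]
            congr 1
            refine Finset.sum_congr rfl fun j _ => ?_
            rw [← Real.rpow_mul (hBnn j t), div_mul_cancel₀ _ hMne,
              show ((2:ℝ) = ((2:ℕ):ℝ)) by norm_num, Real.rpow_natCast]
        _ ≤ ∏ t : Fin (d + 1), ((A t.succ) ^ 2) ^ (M⁻¹) :=
            Finset.prod_le_prod
              (fun t _ => rpow_nonneg (sum_nonneg fun j _ => sq_nonneg _) _)
              (fun t _ => Real.rpow_le_rpow (sum_nonneg fun j _ => sq_nonneg _) (step4c t)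
                (inv_nonneg.2 hM0.le))
    -- Final combination
    calc ∑ i : Fin (d + 1 + 1) → Fin n, a i ^ ρ
        = ∑ j : Fin n, ∑ k : Fin (d + 1) → Fin n, b j k ^ ρ :=
          sum_cons_decomp (fun i => a i ^ ρ)
      _ ≤ ∑ j : Fin n, u j ^ ((M + 1) / (M + 1 + 1)) * v j ^ (2 / (M + 1 + 1)) :=
          sum_le_sum fun j _ => step1 j
      _ ≤ (∑ j : Fin n, u j ^ ((M + 1) / M)) ^ (M / (M + 1 + 1))
            * (∑ j : Fin n, v j) ^ (2 / (M + 1 + 1)) := step2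
      _ ≤ (∏ t : Fin (d + 1), ((A t.succ) ^ 2) ^ (M⁻¹)) ^ (M / (M + 1 + 1))
            * (A 0) ^ (2 / (M + 1 + 1)) := by
          have hv0 : (∑ j : Fin n, v j) = A 0 := by
            refine Finset.sum_congr rfl fun j _ => ?_
            show v j = √(∑ i ∈ Finset.univ.filter
              (fun i : Fin (d + 1 + 1) → Fin n => i 0 = j), a i ^ 2)
            rw [hfilter0 j]
          rw [hv0]
          refine mul_le_mul_of_nonneg_right ?_ (rpow_nonneg (hAnn 0) _)
          exact Real.rpow_le_rpow (sum_nonneg fun j _ => rpow_nonneg (hunn j) _) step4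
            (le_of_lt (div_pos hM0 hM2))
      _ = ∏ s : Fin (d + 1 + 1), A s ^ (2 / (M + 1 + 1)) := by
          conv_rhs => rw [Fin.prod_univ_succ]
          rw [mul_comm]
          congr 1
          rw [← Real.finset_prod_rpow _ _
            (fun t _ => rpow_nonneg (sq_nonneg _) _) _]
          refine Finset.prod_congr rfl fun t _ => ?_
          rw [← Real.rpow_natCast (A t.succ) 2, ← Real.rpow_mul (hAnn _),
            ← Real.rpow_mul (hAnn _)]
          congr 1
          push_cast
          field_simp

/-- **Blei's inequality.** For `𝕜 ∈ {ℝ, ℂ}` and any array `c ∈ 𝕜^{n^d}` indexed by tuples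
`(i₁,…,i_d) ∈ [n]^d`,
`(∏_{s ∈ [d]} ∑_{i_s ∈ [n]} √(∑_{i₁,…,i_{s−1},i_{s+1},…,i_d} |c_{i₁,…,i_d}|²))^{1/d}
  ≥ (∑_{i₁,…,i_d} |c_{i₁,…,i_d}|^{2d/(d+1)})^{(d+1)/(2d)}`. -/
theorem blei_inequality {𝕜 : Type*} [RCLike 𝕜] {n d : ℕ} (c : (Fin d → Fin n) → 𝕜) :
    (∑ i : Fin d → Fin n, ‖c i‖ ^ ((2 * (d : ℝ)) / ((d : ℝ) + 1))) ^
        (((d : ℝ) + 1) / (2 * (d : ℝ))) ≤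
      (∏ s : Fin d, ∑ j : Fin n,
          Real.sqrt (∑ i ∈ Finset.univ.filter fun i : Fin d → Fin n => i s = j,
            ‖c i‖ ^ 2)) ^ ((1 : ℝ) / (d : ℝ)) := by
  rcases d with _ | m
  · have h0 : (2 * ((0:ℕ):ℝ)) / (((0:ℕ):ℝ) + 1) = 0 := by norm_num
    rw [h0]
    simp
  · have key := blei_core m n (fun i => ‖c i‖) (fun i => norm_nonneg _)
    push_cast
    refine le_trans (Real.rpow_le_rpow
      (sum_nonneg fun i _ => Real.rpow_nonneg (norm_nonneg _) _) key (by positivity))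
      (le_of_eq ?_)
    rw [Real.finset_prod_rpow _ _ (fun s _ => sum_nonneg fun j _ => Real.sqrt_nonneg _) _,
      ← Real.rpow_mul (prod_nonneg fun s _ => sum_nonneg fun j _ => Real.sqrt_nonneg _)]
    congr 1
    have hm : (0:ℝ) < (m:ℝ) + 1 := by positivity
    field_simp
end
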